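/- arXiv:math/0612740 — 2 statements merged into one kernel-verified Lean document; each statement's English description precedes it below -/
import Mathlib

section
/- Let χ be a code in a metric symmetric association scheme with base point x, δ_x = min{i ≠ 0 : E_i^*χ ≠ 0}. Suppose t ∈ {1,…,D} is such that for each irreducible T(x)-module W with 1 ≤ r(W) ≤ t, the number of j in the dual support of W with E_jχ ≠ 0 is at most δ_x − r(W). If every irreducible T(x)-module with endpoint at most t is thin, then Fχ is a relative t-codesign with respect to x for every F ∈ T(x). -/
open Matrix

noncomputable section

/-- The standard Hermitian dot product on `X → ℂ` (conjugation on the second argument). -/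
def dotc {X : Type*} [Fintype X] (u v : X → ℂ) : ℂ := ∑ y, u y * (starRingEnd ℂ) (v y)

/-- The characteristic vector `x̂` of a vertex. -/
def xhat {X : Type*} [DecidableEq X] (x : X) : X → ℂ := Pi.single x 1

/-- The characteristic vector of a subset. -/
def chiv {X : Type*} [DecidableEq X] (Y : Finset X) : X → ℂ := fun y => if y ∈ Y then 1 else 0

/-- A symmetric association scheme with `D` classes on a finite vertex set `X`,
presented by its associate matrices `A 0 = I, A 1, …, A D` and its primitive
idempotents `E 0 = |X|⁻¹ J, E 1, …, E D`. -/
structure AssocScheme (X : Type*) [Fintype X] [DecidableEq X] (D : ℕ) where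
  A : Fin (D + 1) → Matrix X X ℂ
  E : Fin (D + 1) → Matrix X X ℂ
  A_zero : A 0 = 1
  A_symm : ∀ i, (A i).IsSymm
  A_entries : ∀ i x y, A i x y = 0 ∨ A i x y = 1
  A_sum : ∑ i, A i = Matrix.of fun _ _ => (1 : ℂ)
  A_mul_closed : ∀ i j, ∃ p : Fin (D + 1) → ℂ, A i * A j = ∑ k, p k • A k
  A_comm : ∀ i j, A i * A j = A j * A i
  E_idem : ∀ i j, E i * E j = if i = j then E i else 0
  E_sum : ∑ j, E j = 1
  E_zero : E 0 = (Fintype.card X : ℂ)⁻¹ • Matrix.of fun _ _ => (1 : ℂ)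
  E_in_A : ∀ j, ∃ q : Fin (D + 1) → ℂ, E j = ∑ i, q i • A i
  A_in_E : ∀ i, ∃ q : Fin (D + 1) → ℂ, A i = ∑ j, q j • E j

namespace AssocScheme

variable {X : Type*} [Fintype X] [DecidableEq X] {D : ℕ}

/-- The associate matrices, reindexed by `ℕ` (zero outside `0,…,D`). -/
def AM (S : AssocScheme X D) (i : ℕ) : Matrix X X ℂ :=
  if h : i < D + 1 then S.A ⟨i, h⟩ else 0

/-- The primitive idempotents, reindexed by `ℕ` (zero outside `0,…,D`). -/
def EM (S : AssocScheme X D) (j : ℕ) : Matrix X X ℂ :=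
  if h : j < D + 1 then S.E ⟨j, h⟩ else 0

/-- The dual idempotent `E_i^*(x)`: the diagonal matrix with `(y,y)`-entry `(A_i)_{x y}`. -/
def Estar (S : AssocScheme X D) (x : X) (i : ℕ) : Matrix X X ℂ :=
  Matrix.diagonal fun y => S.AM i x y

/-- The dual associate matrix `A_j^*(x)`: diagonal with `(y,y)`-entry `|X| (E_j)_{x y}`. -/
def Astar (S : AssocScheme X D) (x : X) (j : ℕ) : Matrix X X ℂ :=
  Matrix.diagonal fun y => (Fintype.card X : ℂ) * S.EM j x y

/-- The subspace `E_i^*(x) V`. -/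
def EstarSp (S : AssocScheme X D) (x : X) (i : ℕ) : Submodule ℂ (X → ℂ) :=
  LinearMap.range (S.Estar x i).mulVecLin

/-- The subspace `E_j V`. -/
def ESp (S : AssocScheme X D) (j : ℕ) : Submodule ℂ (X → ℂ) :=
  LinearMap.range (S.EM j).mulVecLin

/-- The scheme is metric (P-polynomial) w.r.t. the ordering `A 0, …, A D`:
`A 1` generates the Bose–Mesner algebra, and left multiplication by `A 1` acts
tridiagonally on the dual decomposition `V = ⊕ᵢ E_i^*(x) V` for each base vertex. -/
def IsMetric (S : AssocScheme X D) : Prop :=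
  (∀ i, S.A i ∈ Algebra.adjoin ℂ {S.A 1}) ∧
  ∀ (x : X) (i : ℕ) (v : X → ℂ), v ∈ S.EstarSp x i →
    (S.A 1).mulVec v ∈ S.EstarSp x (i - 1) ⊔ S.EstarSp x i ⊔ S.EstarSp x (i + 1)

/-- The scheme is cometric (Q-polynomial) w.r.t. the ordering `E 0, …, E D`:
`A_1^*(x)` generates the dual Bose–Mesner algebra and acts tridiagonally on the
decomposition `V = ⊕ⱼ E_j V`, for each base vertex `x`. -/
def IsCometric (S : AssocScheme X D) : Prop :=
  (∀ (x : X) (j : Fin (D + 1)), S.Astar x j ∈ Algebra.adjoin ℂ {S.Astar x 1}) ∧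
  ∀ (x : X) (j : ℕ) (v : X → ℂ), v ∈ S.ESp j →
    (S.Astar x 1).mulVec v ∈ S.ESp (j - 1) ⊔ S.ESp j ⊔ S.ESp (j + 1)

/-- A vector `χ` is a code if `χ ∉ E_0 V` and `χ ∉ E_0^*(z) V` for every vertex `z`. -/
def IsCode (S : AssocScheme X D) (χ : X → ℂ) : Prop :=
  χ ∉ S.ESp 0 ∧ ∀ z : X, χ ∉ S.EstarSp z 0

/-- `δ_x(χ) = min { i ≠ 0 : E_i^*(x) χ ≠ 0 }`. -/
def deltaX (S : AssocScheme X D) (x : X) (χ : X → ℂ) : ℕ :=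
  sInf {i : ℕ | i ≠ 0 ∧ (S.Estar x i).mulVec χ ≠ 0}

/-- `s_x(χ) = #{ i ≠ 0 : E_i^*(x) χ ≠ 0 }`. -/
def sX (S : AssocScheme X D) (x : X) (χ : X → ℂ) : ℕ :=
  {i : ℕ | i ≠ 0 ∧ (S.Estar x i).mulVec χ ≠ 0}.ncard

/-- `δ^*(χ) = min { j ≠ 0 : E_j χ ≠ 0 }` (dual distance). -/
def deltaStar (S : AssocScheme X D) (χ : X → ℂ) : ℕ :=
  sInf {j : ℕ | j ≠ 0 ∧ (S.EM j).mulVec χ ≠ 0}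

/-- `s^*(χ) = #{ j ≠ 0 : E_j χ ≠ 0 }` (dual degree). -/
def sStar (S : AssocScheme X D) (χ : X → ℂ) : ℕ :=
  {j : ℕ | j ≠ 0 ∧ (S.EM j).mulVec χ ≠ 0}.ncard

/-- `δ(χ) = min { i ≠ 0 : ⟨χ, A_i χ⟩ ≠ 0 }` (minimum distance). -/
def deltaMin (S : AssocScheme X D) (χ : X → ℂ) : ℕ :=
  sInf {i : ℕ | i ≠ 0 ∧ dotc χ ((S.AM i).mulVec χ) ≠ 0}

/-- `s(χ) = #{ i ≠ 0 : ⟨χ, A_i χ⟩ ≠ 0 }` (degree). -/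
def degree (S : AssocScheme X D) (χ : X → ℂ) : ℕ :=
  {i : ℕ | i ≠ 0 ∧ dotc χ ((S.AM i).mulVec χ) ≠ 0}.ncard

/-- `ψ` is a relative `t`-codesign w.r.t. `x`: `E_i^* ψ ∈ ℂ · A_i x̂` for `1 ≤ i ≤ t`. -/
def RelCodesign (S : AssocScheme X D) (x : X) (t : ℕ) (ψ : X → ℂ) : Prop :=
  ∀ i : ℕ, 1 ≤ i → i ≤ t → ∃ c : ℂ, (S.Estar x i).mulVec ψ = c • (S.AM i).mulVec (xhat x)

/-- `ψ` is a relative `t`-design w.r.t. `x`: `E_j ψ ∈ ℂ · E_j x̂` for `1 ≤ j ≤ t`. -/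
def RelDesign (S : AssocScheme X D) (x : X) (t : ℕ) (ψ : X → ℂ) : Prop :=
  ∀ j : ℕ, 1 ≤ j → j ≤ t → ∃ c : ℂ, (S.EM j).mulVec ψ = c • (S.EM j).mulVec (xhat x)

/-- The Terwilliger algebra `T(x)`, generated by the Bose–Mesner algebra and the
dual Bose–Mesner algebra with respect to `x`. -/
def Talg (S : AssocScheme X D) (x : X) : Subalgebra ℂ (Matrix X X ℂ) :=
  Algebra.adjoin ℂ (Set.range S.A ∪ Set.range fun i : Fin (D + 1) => S.Estar x (i : ℕ))

/-- A `T(x)`-submodule of the standard module. -/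
def IsTSub (S : AssocScheme X D) (x : X) (W : Submodule ℂ (X → ℂ)) : Prop :=
  ∀ F ∈ S.Talg x, ∀ v ∈ W, F.mulVec v ∈ W

/-- An irreducible `T(x)`-module inside the standard module. -/
def IsIrr (S : AssocScheme X D) (x : X) (W : Submodule ℂ (X → ℂ)) : Prop :=
  S.IsTSub x W ∧ W ≠ ⊥ ∧ ∀ W' ≤ W, S.IsTSub x W' → W' = ⊥ ∨ W' = W

/-- The support `W_s = { i : E_i^*(x) W ≠ 0 }` of a module. -/
def supp (S : AssocScheme X D) (x : X) (W : Submodule ℂ (X → ℂ)) : Set ℕ :=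
  {i : ℕ | i ≤ D ∧ Submodule.map (S.Estar x i).mulVecLin W ≠ ⊥}

/-- The dual support `W_s^* = { j : E_j W ≠ 0 }` of a module. -/
def dualSupp (S : AssocScheme X D) (W : Submodule ℂ (X → ℂ)) : Set ℕ :=
  {j : ℕ | j ≤ D ∧ Submodule.map (S.EM j).mulVecLin W ≠ ⊥}

/-- The endpoint `r(W) = min { i : E_i^*(x) W ≠ 0 }`. -/
def endpoint (S : AssocScheme X D) (x : X) (W : Submodule ℂ (X → ℂ)) : ℕ :=
  sInf (S.supp x W)

/-- The dual endpoint `r^*(W) = min { j : E_j W ≠ 0 }`. -/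
def dualEndpoint (S : AssocScheme X D) (W : Submodule ℂ (X → ℂ)) : ℕ :=
  sInf (S.dualSupp W)

/-- The diameter `d(W) = |W_s| - 1`. -/
def diam (S : AssocScheme X D) (x : X) (W : Submodule ℂ (X → ℂ)) : ℕ :=
  (S.supp x W).ncard - 1

/-- The dual diameter `d^*(W) = |W_s^*| - 1`. -/
def dualDiam (S : AssocScheme X D) (W : Submodule ℂ (X → ℂ)) : ℕ :=
  (S.dualSupp W).ncard - 1

/-- `W` is thin: `dim E_i^*(x) W ≤ 1` for all `i`. -/
def IsThin (S : AssocScheme X D) (x : X) (W : Submodule ℂ (X → ℂ)) : Prop :=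
  ∀ i : ℕ, Module.finrank ℂ (Submodule.map (S.Estar x i).mulVecLin W) ≤ 1

/-- `W` is dual thin: `dim E_j W ≤ 1` for all `j`. -/
def IsDualThin (S : AssocScheme X D) (W : Submodule ℂ (X → ℂ)) : Prop :=
  ∀ j : ℕ, Module.finrank ℂ (Submodule.map (S.EM j).mulVecLin W) ≤ 1

/-- The displacement `η(W) = r(W) + r^*(W) + d(W) - D` (as an integer). -/
def disp (S : AssocScheme X D) (x : X) (W : Submodule ℂ (X → ℂ)) : ℤ :=
  (S.endpoint x W : ℤ) + (S.dualEndpoint W : ℤ) + (S.diam x W : ℤ) - (D : ℤ)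

/-- `V_0`: the span of the irreducible `T(x)`-modules of displacement zero. -/
def V0 (S : AssocScheme X D) (x : X) : Submodule ℂ (X → ℂ) :=
  ⨆ (W : Submodule ℂ (X → ℂ)) (_ : S.IsIrr x W ∧ S.disp x W = 0), W

/-- The split-decomposition subspace `V_{ij} = (Σ_{k ≤ i} E_k^* V) ∩ (Σ_{ℓ ≤ j} E_ℓ V)`. -/
def Vij (S : AssocScheme X D) (x : X) (i j : ℕ) : Submodule ℂ (X → ℂ) :=
  (⨆ k ∈ Finset.range (i + 1), S.EstarSp x k) ⊓ (⨆ l ∈ Finset.range (j + 1), S.ESp l)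

/-- The primary module `M x̂`. -/
def primary (S : AssocScheme X D) (x : X) : Submodule ℂ (X → ℂ) :=
  Submodule.span ℂ (Set.range fun i : Fin (D + 1) => (S.A i).mulVec (xhat x))

/-- The graph `(X, R_1)` is bipartite. -/
def IsBipartiteGraph (S : AssocScheme X D) : Prop :=
  ∃ f : X → Bool, ∀ x y : X, S.A 1 x y ≠ 0 → f x ≠ f y

/-- `Y` is a bipartite half: one colour class of a proper 2-colouring of `(X, R_1)`. -/
def IsBipartiteHalf (S : AssocScheme X D) (Y : Finset X) : Prop :=
  ∃ f : X → Bool, (∀ x y : X, S.A 1 x y ≠ 0 → f x ≠ f y) ∧ (Y : Set X) = {x | f x = true}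

/-- The scheme is antipodal: `R_0 ∪ R_D` is an equivalence relation. -/
def IsAntipodal (S : AssocScheme X D) : Prop :=
  ∀ x y z : X, y ≠ z → S.AM D x y ≠ 0 → S.AM D x z ≠ 0 → S.AM D y z ≠ 0

/-- The scheme is an antipodal double cover: antipodal with fibres of size two. -/
def IsAntipodalDoubleCover (S : AssocScheme X D) : Prop :=
  S.IsAntipodal ∧ ∀ x : X, ∃! y : X, S.AM D x y ≠ 0

/-- The scheme is that of an ordinary cycle: the graph `(X, R_1)` has valency two. -/
def IsOrdinaryCycle (S : AssocScheme X D) : Prop :=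
  ∀ x : X, {y : X | S.A 1 x y ≠ 0}.ncard = 2

end AssocScheme

section AMP

open AssocScheme Finset

variable {X : Type*} [Fintype X] [DecidableEq X] {D : ℕ} (S : AssocScheme X D) (x : X)

lemma AMP_AM_coe (i : Fin (D+1)) : S.AM (i : ℕ) = S.A i := by
  rw [AssocScheme.AM, dif_pos i.isLt]

lemma AMP_AM_of_le {i : ℕ} (h : i ≤ D) : S.AM i = S.A ⟨i, Nat.lt_succ_of_le h⟩ :=
  dif_pos _

lemma AMP_AM_of_gt {i : ℕ} (h : D < i) : S.AM i = 0 := dif_neg (by omega)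

lemma AMP_EM_coe (j : Fin (D+1)) : S.EM (j : ℕ) = S.E j := by
  rw [AssocScheme.EM, dif_pos j.isLt]

lemma AMP_EM_of_gt {j : ℕ} (h : D < j) : S.EM j = 0 := dif_neg (by omega)

lemma AMP_AM_entries (i : ℕ) (y z : X) : S.AM i y z = 0 ∨ S.AM i y z = 1 := by
  by_cases h : i ≤ D
  · rw [AMP_AM_of_le S h]; exact S.A_entries _ y z
  · left; rw [AMP_AM_of_gt S (by omega)]; rfl

lemma AMP_A_entry_mul {i k : Fin (D+1)} (hik : i ≠ k) (y : X) :
    S.A i x y * S.A k x y = 0 := by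
  rcases S.A_entries i x y with h | h
  · rw [h, zero_mul]
  rcases S.A_entries k x y with h' | h'
  · rw [h', mul_zero]
  exfalso
  have hsum : ∑ m, S.A m x y = 1 := by
    have := congrFun (congrFun S.A_sum x) y
    simpa [Matrix.sum_apply] using this
  have hnn : ∀ m ∈ (Finset.univ : Finset (Fin (D+1))), 0 ≤ (S.A m x y).re := by
    intro m _
    rcases S.A_entries m x y with h'' | h'' <;> simp [h'']
  have h2 : (2 : ℝ) ≤ (∑ m, S.A m x y).re := by
    rw [Complex.re_sum]
    calc (2 : ℝ) = ∑ m ∈ ({i, k} : Finset (Fin (D+1))), (S.A m x y).re := by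
          rw [Finset.sum_pair hik, h, h']; norm_num
      _ ≤ _ := Finset.sum_le_sum_of_subset_of_nonneg (Finset.subset_univ _)
          (fun m hm _ => hnn m hm)
  rw [hsum] at h2
  norm_num at h2

lemma AMP_AM_entry_mul {i k : ℕ} (hik : i ≠ k) (y : X) :
    S.AM i x y * S.AM k x y = 0 := by
  by_cases hi : i ≤ D
  · by_cases hk : k ≤ D
    · rw [AMP_AM_of_le S hi, AMP_AM_of_le S hk]
      exact AMP_A_entry_mul S x (by simp [Fin.ext_iff, hik]) y
    · rw [AMP_AM_of_gt S (show D < k by omega)]; simp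
  · rw [AMP_AM_of_gt S (show D < i by omega)]; simp

lemma AMP_AM_entry_sq (i : ℕ) (y : X) : S.AM i x y * S.AM i x y = S.AM i x y := by
  rcases AMP_AM_entries S i x y with h | h <;> rw [h] <;> ring

lemma AMP_Estar_of_gt {i : ℕ} (h : D < i) : S.Estar x i = 0 := by
  rw [AssocScheme.Estar, AMP_AM_of_gt S h]
  simp [Matrix.diagonal_zero]

lemma AMP_Estar_mul_self (i : ℕ) : S.Estar x i * S.Estar x i = S.Estar x i := by
  rw [AssocScheme.Estar, Matrix.diagonal_mul_diagonal]
  exact congrArg Matrix.diagonal (funext fun y => AMP_AM_entry_sq S x i y)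

lemma AMP_Estar_mul_ne {i k : ℕ} (h : i ≠ k) : S.Estar x i * S.Estar x k = 0 := by
  rw [AssocScheme.Estar, AssocScheme.Estar, Matrix.diagonal_mul_diagonal]
  have : (fun y => S.AM i x y * S.AM k x y) = fun _ => (0 : ℂ) := by
    funext y; exact AMP_AM_entry_mul S x h y
  rw [this, Matrix.diagonal_zero]

lemma AMP_sum_Estar : ∑ i ∈ Finset.range (D+1), S.Estar x i = 1 := by
  ext y z
  simp only [Matrix.sum_apply, AssocScheme.Estar, Matrix.diagonal_apply, Matrix.one_apply]
  by_cases h : y = z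
  · subst h
    simp only [if_pos rfl, if_true]
    have : ∑ i ∈ Finset.range (D+1), S.AM i x y = ∑ i : Fin (D+1), S.A i x y := by
      rw [← Fin.sum_univ_eq_sum_range (fun i => S.AM i x y) (D+1)]
      exact Finset.sum_congr rfl fun i _ => by rw [AMP_AM_coe]
    rw [this, ← Matrix.sum_apply, S.A_sum]
    rfl
  · simp [h]

lemma AMP_sum_EM : ∑ j ∈ Finset.range (D+1), S.EM j = 1 := by
  rw [← Fin.sum_univ_eq_sum_range (fun j => S.EM j) (D+1), ← S.E_sum]
  exact Finset.sum_congr rfl fun j _ => AMP_EM_coe S j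

lemma AMP_mulVec_sum {ι : Type*} (s : Finset ι) (M : Matrix X X ℂ) (f : ι → X → ℂ) :
    M *ᵥ (∑ k ∈ s, f k) = ∑ k ∈ s, M *ᵥ f k :=
  map_sum M.mulVecLin f s

lemma AMP_sum_mulVec {ι : Type*} (s : Finset ι) (f : ι → Matrix X X ℂ) (v : X → ℂ) :
    (∑ k ∈ s, f k) *ᵥ v = ∑ k ∈ s, f k *ᵥ v :=
  map_sum (Matrix.mulVec.addMonoidHomLeft v) f s

lemma AMP_sum_Estar_mulVec (v : X → ℂ) :
    ∑ i ∈ Finset.range (D+1), S.Estar x i *ᵥ v = v := by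
  rw [← AMP_sum_mulVec, AMP_sum_Estar, Matrix.one_mulVec]

lemma AMP_Estar_Estar_self (i : ℕ) (v : X → ℂ) :
    S.Estar x i *ᵥ (S.Estar x i *ᵥ v) = S.Estar x i *ᵥ v := by
  rw [Matrix.mulVec_mulVec, AMP_Estar_mul_self]

lemma AMP_Estar_Estar_ne {i k : ℕ} (h : i ≠ k) (v : X → ℂ) :
    S.Estar x i *ᵥ (S.Estar x k *ᵥ v) = 0 := by
  rw [Matrix.mulVec_mulVec, AMP_Estar_mul_ne S x h, Matrix.zero_mulVec]

lemma AMP_Estar_kill {i m : ℕ} (h : i ≠ m) {w : X → ℂ} (hw : w ∈ S.EstarSp x m) :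
    S.Estar x i *ᵥ w = 0 := by
  obtain ⟨w', rfl⟩ := hw
  exact AMP_Estar_Estar_ne S x h w'

end AMP
section AMP2

open AssocScheme Finset
open scoped InnerProductSpace

variable {X : Type*} [Fintype X] [DecidableEq X] {D : ℕ} (S : AssocScheme X D) (x : X)

lemma AMP_Estar_mulVec (i : ℕ) (v : X → ℂ) (y : X) :
    (S.Estar x i *ᵥ v) y = S.AM i x y * v y :=
  Matrix.mulVec_diagonal _ _ _

lemma AMP_tri_kill (hS : S.IsMetric) {i k : ℕ} (h : i + 1 < k ∨ k + 1 < i) (v : X → ℂ) :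
    S.Estar x i *ᵥ (S.A 1 *ᵥ (S.Estar x k *ᵥ v)) = 0 := by
  have hmem : S.Estar x k *ᵥ v ∈ S.EstarSp x k := ⟨v, rfl⟩
  have h3 := hS.2 x k _ hmem
  rw [Submodule.mem_sup] at h3
  obtain ⟨a, ha, c, hc, heq⟩ := h3
  rw [Submodule.mem_sup] at ha
  obtain ⟨a1, ha1, a2, ha2, rfl⟩ := ha
  rw [← heq, Matrix.mulVec_add, Matrix.mulVec_add]
  rw [AMP_Estar_kill S x (show i ≠ k - 1 by omega) ha1,
    AMP_Estar_kill S x (show i ≠ k by omega) ha2,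
    AMP_Estar_kill S x (show i ≠ k + 1 by omega) hc]
  simp

lemma AMP_A_mem (j : Fin (D+1)) : S.A j ∈ S.Talg x :=
  Algebra.subset_adjoin (Or.inl ⟨j, rfl⟩)

lemma AMP_Estar_mem (i : ℕ) : S.Estar x i ∈ S.Talg x := by
  by_cases h : i ≤ D
  · exact Algebra.subset_adjoin (Or.inr ⟨⟨i, Nat.lt_succ_of_le h⟩, rfl⟩)
  · rw [AMP_Estar_of_gt S x (by omega)]
    exact Subalgebra.zero_mem _

lemma AMP_AM_mem (i : ℕ) : S.AM i ∈ S.Talg x := by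
  by_cases h : i ≤ D
  · rw [AMP_AM_of_le S h]; exact AMP_A_mem S x _
  · rw [AMP_AM_of_gt S (by omega)]; exact Subalgebra.zero_mem _

lemma AMP_EM_mem (j : ℕ) : S.EM j ∈ S.Talg x := by
  by_cases h : j ≤ D
  · have : S.EM j = S.E ⟨j, Nat.lt_succ_of_le h⟩ := dif_pos _
    rw [this]
    obtain ⟨q, hq⟩ := S.E_in_A ⟨j, Nat.lt_succ_of_le h⟩
    rw [hq]
    exact Subalgebra.sum_mem _ fun i _ => Subalgebra.smul_mem _ (AMP_A_mem S x i) _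
  · rw [AMP_EM_of_gt S (by omega)]; exact Subalgebra.zero_mem _

lemma AMP_star_A (j : Fin (D+1)) : star (S.A j) = S.A j := by
  ext y z
  rw [Matrix.star_apply, (S.A_symm j).apply]
  rcases S.A_entries j y z with h | h <;> rw [h] <;> simp

lemma AMP_star_Estar (i : ℕ) : star (S.Estar x i) = S.Estar x i := by
  ext y z
  rw [Matrix.star_apply]
  rw [AssocScheme.Estar, Matrix.diagonal_apply, Matrix.diagonal_apply]
  by_cases h : z = y
  · subst h
    simp only [if_pos rfl]
    rcases AMP_AM_entries S i x z with h' | h' <;> rw [h'] <;> simp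
  · rw [if_neg h, if_neg (fun hh => h hh.symm), star_zero]

lemma AMP_star_mem_Talg {F : Matrix X X ℂ} (hF : F ∈ S.Talg x) : star F ∈ S.Talg x := by
  induction hF using Algebra.adjoin_induction with
  | mem M hM =>
    rcases hM with ⟨j, rfl⟩ | ⟨j, rfl⟩
    · rw [AMP_star_A]; exact AMP_A_mem S x j
    · rw [AMP_star_Estar]; exact AMP_Estar_mem S x j
  | algebraMap r =>
    rw [Algebra.algebraMap_eq_smul_one, star_smul, star_one]
    exact Subalgebra.smul_mem _ (Subalgebra.one_mem _) _
  | add a b ha hb hA hB => rw [star_add]; exact Subalgebra.add_mem _ hA hB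
  | mul a b ha hb hA hB => rw [StarMul.star_mul]; exact Subalgebra.mul_mem _ hB hA

/-- The subalgebra of matrices stabilising a submodule. -/
def AMPstab (U : Submodule ℂ (X → ℂ)) : Subalgebra ℂ (Matrix X X ℂ) where
  carrier := {M | ∀ v ∈ U, M *ᵥ v ∈ U}
  add_mem' := fun {M N} hM hN v hv => by
    rw [Matrix.add_mulVec]; exact U.add_mem (hM v hv) (hN v hv)
  mul_mem' := fun {M N} hM hN v hv => by
    rw [← Matrix.mulVec_mulVec]; exact hM _ (hN v hv)
  algebraMap_mem' := fun c v hv => by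
    show (algebraMap ℂ (Matrix X X ℂ) c) *ᵥ v ∈ U
    rw [Algebra.algebraMap_eq_smul_one, Matrix.smul_mulVec, Matrix.one_mulVec]
    exact U.smul_mem c hv

lemma AMP_isTSub_of_gens {U : Submodule ℂ (X → ℂ)}
    (hA : ∀ i : Fin (D+1), ∀ v ∈ U, S.A i *ᵥ v ∈ U)
    (hE : ∀ i : Fin (D+1), ∀ v ∈ U, S.Estar x (i : ℕ) *ᵥ v ∈ U) : S.IsTSub x U := by
  intro F hF
  have hle : S.Talg x ≤ AMPstab U := Algebra.adjoin_le (by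
    rintro M (⟨i, rfl⟩ | ⟨i, rfl⟩)
    · exact hA i
    · exact hE i)
  exact hle hF

lemma AMP_adjA1_stab {U : Submodule ℂ (X → ℂ)} (hS : S.IsMetric)
    (h1 : ∀ v ∈ U, S.A 1 *ᵥ v ∈ U) :
    ∀ i : Fin (D+1), ∀ v ∈ U, S.A i *ᵥ v ∈ U := by
  intro i
  have hle : Algebra.adjoin ℂ {S.A 1} ≤ AMPstab U := Algebra.adjoin_le (by
    rintro M hM
    rw [Set.mem_singleton_iff] at hM
    subst hM
    exact h1)
  exact fun v hv => hle (hS.1 i) v hv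

lemma AMP_dotc_add (u v w : X → ℂ) : dotc (u + v) w = dotc u w + dotc v w := by
  simp [dotc, add_mul, Finset.sum_add_distrib]

lemma AMP_dotc_smul (c : ℂ) (v w : X → ℂ) : dotc (c • v) w = c * dotc v w := by
  simp [dotc, Finset.mul_sum, mul_assoc]

lemma AMP_dotc_zero (w : X → ℂ) : dotc (0 : X → ℂ) w = 0 := by simp [dotc]

lemma AMP_dotc_star (v w : X → ℂ) : dotc v w = star (dotc w v) := by
  rw [dotc, dotc, star_sum]
  refine Finset.sum_congr rfl fun y _ => ?_
  rw [star_mul']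
  simp [Complex.star_def, Complex.conj_conj, mul_comm]

lemma AMP_dotc_sum {ι : Type*} (s : Finset ι) (f : ι → X → ℂ) (w : X → ℂ) :
    dotc (∑ k ∈ s, f k) w = ∑ k ∈ s, dotc (f k) w := by
  simp only [dotc, Finset.sum_apply, Finset.sum_mul]
  exact Finset.sum_comm

lemma AMP_dotc_self_eq_zero {v : X → ℂ} (h : dotc v v = 0) : v = 0 := by
  have h' : ∑ y, Complex.normSq (v y) = 0 := by
    have h2 : dotc v v = ((∑ y, Complex.normSq (v y) : ℝ) : ℂ) := by
      simp only [dotc, Complex.mul_conj]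
      push_cast
      rfl
    rw [h2] at h
    exact_mod_cast h
  have hnn : ∀ y ∈ (Finset.univ : Finset X), 0 ≤ Complex.normSq (v y) :=
    fun y _ => Complex.normSq_nonneg _
  funext y
  have := (Finset.sum_eq_zero_iff_of_nonneg hnn).mp h' y (Finset.mem_univ y)
  exact Complex.normSq_eq_zero.mp this

lemma AMP_dotc_mulVec (M : Matrix X X ℂ) (v w : X → ℂ) :
    dotc (M *ᵥ v) w = dotc v (star M *ᵥ w) := by
  simp only [dotc, Matrix.mulVec, dotProduct, Matrix.star_apply, map_sum,
    Finset.sum_mul, Finset.mul_sum]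
  rw [Finset.sum_comm]
  refine Finset.sum_congr rfl fun z _ => Finset.sum_congr rfl fun y _ => ?_
  simp only [Complex.star_def]
  rw [map_mul (starRingEnd ℂ), Complex.conj_conj]
  ring

end AMP2
section AMP3

open AssocScheme Finset
open scoped ComplexInnerProductSpace

variable {X : Type*} [Fintype X] [DecidableEq X] {D : ℕ} (S : AssocScheme X D) (x : X)

/-- The `dotc`-orthogonal complement. -/
def AMPorthc {X : Type*} [Fintype X] [DecidableEq X] (W : Submodule ℂ (X → ℂ)) : Submodule ℂ (X → ℂ) where
  carrier := {v | ∀ w ∈ W, dotc v w = 0}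
  zero_mem' := fun w _ => AMP_dotc_zero w
  add_mem' := fun {a b} ha hb w hw => by rw [AMP_dotc_add, ha w hw, hb w hw, add_zero]
  smul_mem' := fun c a ha w hw => by
    show dotc (c • a) w = 0
    rw [AMP_dotc_smul, ha w hw, mul_zero]

lemma AMP_mem_orthc {X : Type*} [Fintype X] [DecidableEq X] {W : Submodule ℂ (X → ℂ)} {v : X → ℂ} :
    v ∈ AMPorthc W ↔ ∀ w ∈ W, dotc v w = 0 := Iff.rfl

lemma AMP_exists_orth_decomp (W : Submodule ℂ (X → ℂ)) (u : X → ℂ) :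
    ∃ w ∈ W, u - w ∈ AMPorthc W := by
  let e : (X → ℂ) ≃ₗ[ℂ] EuclideanSpace ℂ X := (WithLp.linearEquiv 2 ℂ (X → ℂ)).symm
  have hiner : ∀ a b : X → ℂ, ⟪e b, e a⟫ = dotc a b := by
    intro a b
    rw [PiLp.inner_apply, dotc]
    refine Finset.sum_congr rfl fun y _ => ?_
    have h1 : e b y = b y := rfl
    have h2 : e a y = a y := rfl
    rw [h1, h2, RCLike.inner_apply]
  let K : Submodule ℂ (EuclideanSpace ℂ X) := W.map (e : (X → ℂ) →ₗ[ℂ] EuclideanSpace ℂ X)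
  haveI : CompleteSpace K := FiniteDimensional.complete ℂ K
  obtain ⟨y, hy, z, hz, hyz⟩ := K.exists_add_mem_mem_orthogonal (e u)
  obtain ⟨w, hwW, hwy⟩ := hy
  refine ⟨w, hwW, ?_⟩
  intro w' hw'
  have hz' : e (u - w) = z := by
    rw [map_sub]
    have : e w = y := hwy
    rw [this, hyz]
    abel
  have h0 : ⟪e w', z⟫ = 0 :=
    (Submodule.mem_orthogonal K z).mp hz (e w')
      (Submodule.mem_map_of_mem hw')
  rw [← hiner, hz', h0]

lemma AMP_mem_EstarSp {i : ℕ} {v : X → ℂ} :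
    v ∈ S.EstarSp x i ↔ S.Estar x i *ᵥ v = v := by
  constructor
  · rintro ⟨w, rfl⟩
    exact AMP_Estar_Estar_self S x i w
  · intro h
    exact ⟨v, h⟩

lemma AMP_supp_mem {W : Submodule ℂ (X → ℂ)} {i : ℕ} (hiD : i ≤ D) {w : X → ℂ}
    (hw : w ∈ W) (hne : S.Estar x i *ᵥ w ≠ 0) : i ∈ S.supp x W := by
  refine ⟨hiD, fun hbot => hne ?_⟩
  have hmem : (S.Estar x i).mulVecLin w ∈ Submodule.map (S.Estar x i).mulVecLin W :=
    Submodule.mem_map_of_mem hw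
  rw [hbot] at hmem
  simpa [Matrix.mulVecLin_apply] using hmem

lemma AMP_supp_nonempty {W : Submodule ℂ (X → ℂ)} (hW : W ≠ ⊥) :
    (S.supp x W).Nonempty := by
  obtain ⟨w, hwW, hw0⟩ := Submodule.exists_mem_ne_zero_of_ne_bot hW
  have hex : ∃ i ∈ Finset.range (D+1), S.Estar x i *ᵥ w ≠ 0 := by
    by_contra h
    push_neg at h
    exact hw0 (by rw [← AMP_sum_Estar_mulVec S x w]; exact Finset.sum_eq_zero h)
  obtain ⟨i, hi, hne⟩ := hex
  exact ⟨i, AMP_supp_mem S x (Nat.lt_succ_iff.mp (Finset.mem_range.mp hi)) hwW hne⟩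

lemma AMP_Estar_zero_of_notin_supp {W : Submodule ℂ (X → ℂ)} {i : ℕ} (hiD : i ≤ D)
    (hi : i ∉ S.supp x W) {v : X → ℂ} (hv : v ∈ W) : S.Estar x i *ᵥ v = 0 := by
  by_contra h
  exact hi (AMP_supp_mem S x hiD hv h)

lemma AMP_Estar_zero_of_lt_endpoint {W : Submodule ℂ (X → ℂ)}
    (hne : (S.supp x W).Nonempty) {i : ℕ} (hlt : i < S.endpoint x W)
    {v : X → ℂ} (hv : v ∈ W) : S.Estar x i *ᵥ v = 0 := by
  have hD : S.endpoint x W ≤ D := (Nat.sInf_mem hne).1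
  exact AMP_Estar_zero_of_notin_supp S x (by omega)
    (Nat.notMem_of_lt_sInf hlt) hv

lemma AMP_eq_smul_of_finrank_le_one {P : Submodule ℂ (X → ℂ)}
    (hP : Module.finrank ℂ P ≤ 1) {e y : X → ℂ} (he : e ∈ P) (he0 : e ≠ 0)
    (hy : y ∈ P) : ∃ c : ℂ, y = c • e := by
  have h1 : Submodule.span ℂ {e} ≤ P := by
    rwa [Submodule.span_singleton_le_iff_mem]
  have h2 : Module.finrank ℂ (Submodule.span ℂ ({e} : Set (X → ℂ))) = 1 :=
    finrank_span_singleton he0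
  have h3 : Submodule.span ℂ ({e} : Set (X → ℂ)) = P :=
    Submodule.eq_of_le_of_finrank_le h1 (by omega)
  rw [← h3] at hy
  obtain ⟨c, hc⟩ := Submodule.mem_span_singleton.mp hy
  exact ⟨c, hc.symm⟩

lemma AMP_xhat_ne_zero : xhat x ≠ (0 : X → ℂ) := by
  intro h
  have := congrFun h x
  simp [xhat] at this

lemma AMP_Estar_A_xhat (k : ℕ) (j : Fin (D+1)) :
    S.Estar x k *ᵥ (S.A j *ᵥ xhat x) = if k = (j : ℕ) then S.A j *ᵥ xhat x else 0 := by
  funext y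
  have hx : (S.A j *ᵥ xhat x) y = S.A j y x := by
    simp [xhat, Matrix.mulVec_single]
  have hsym : S.A j y x = S.A j x y := (S.A_symm j).apply x y
  by_cases h : k = (j : ℕ)
  · subst h
    rw [if_pos rfl, AMP_Estar_mulVec, hx, hsym, ← AMP_AM_coe S j]
    exact AMP_AM_entry_sq S x _ y
  · rw [if_neg h]
    show (S.Estar x k *ᵥ (S.A j *ᵥ xhat x)) y = (0 : X → ℂ) y
    rw [AMP_Estar_mulVec, hx, hsym, ← AMP_AM_coe S j]
    simpa using AMP_AM_entry_mul S x h y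

lemma AMP_primary_TSub : S.IsTSub x (S.primary x) := by
  have hxmem : ∀ j : Fin (D+1), S.A j *ᵥ xhat x ∈ S.primary x := by
    intro j
    exact Submodule.subset_span ⟨j, rfl⟩
  apply AMP_isTSub_of_gens
  · intro i v hv
    have hmap : (S.A i).mulVecLin '' (Set.range fun j : Fin (D+1) => (S.A j).mulVec (xhat x))
        ⊆ (S.primary x : Set (X → ℂ)) := by
      rintro _ ⟨_, ⟨j, rfl⟩, rfl⟩
      obtain ⟨p, hp⟩ := S.A_mul_closed i j
      show (S.A i).mulVec ((S.A j).mulVec (xhat x)) ∈ S.primary x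
      rw [Matrix.mulVec_mulVec, hp, AMP_sum_mulVec]
      exact Submodule.sum_mem _ fun k _ => by
        rw [Matrix.smul_mulVec]
        exact Submodule.smul_mem _ _ (hxmem k)
    have : (S.A i).mulVecLin v ∈ Submodule.map (S.A i).mulVecLin (S.primary x) :=
      Submodule.mem_map_of_mem hv
    rw [AssocScheme.primary, Submodule.map_span] at this
    exact Submodule.span_le.mpr hmap this
  · intro i v hv
    have hmap : (S.Estar x (i:ℕ)).mulVecLin '' (Set.range fun j : Fin (D+1) => (S.A j).mulVec (xhat x))
        ⊆ (S.primary x : Set (X → ℂ)) := by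
      rintro _ ⟨_, ⟨j, rfl⟩, rfl⟩
      show (S.Estar x (i:ℕ)).mulVec ((S.A j).mulVec (xhat x)) ∈ S.primary x
      rw [AMP_Estar_A_xhat]
      by_cases h : (i : ℕ) = (j : ℕ)
      · rw [if_pos h]; exact hxmem j
      · rw [if_neg h]; exact Submodule.zero_mem _
    have : (S.Estar x (i:ℕ)).mulVecLin v ∈ Submodule.map (S.Estar x (i:ℕ)).mulVecLin (S.primary x) :=
      Submodule.mem_map_of_mem hv
    rw [AssocScheme.primary, Submodule.map_span] at this
    exact Submodule.span_le.mpr hmap this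

lemma AMP_Estar_primary (i : ℕ) {v : X → ℂ} (hv : v ∈ S.primary x) :
    S.Estar x i *ᵥ v ∈ Submodule.span ℂ ({(S.AM i).mulVec (xhat x)} : Set (X → ℂ)) := by
  have hmap : (S.Estar x i).mulVecLin '' (Set.range fun j : Fin (D+1) => (S.A j).mulVec (xhat x))
      ⊆ (Submodule.span ℂ ({(S.AM i).mulVec (xhat x)} : Set (X → ℂ)) : Set (X → ℂ)) := by
    rintro _ ⟨_, ⟨j, rfl⟩, rfl⟩
    show (S.Estar x i).mulVec ((S.A j).mulVec (xhat x)) ∈ _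
    rw [AMP_Estar_A_xhat]
    by_cases h : i = (j : ℕ)
    · rw [if_pos h]
      subst h
      rw [AMP_AM_coe]
      exact Submodule.subset_span rfl
    · rw [if_neg h]; exact Submodule.zero_mem _
  have : (S.Estar x i).mulVecLin v ∈ Submodule.map (S.Estar x i).mulVecLin (S.primary x) :=
    Submodule.mem_map_of_mem hv
  rw [AssocScheme.primary, Submodule.map_span] at this
  exact Submodule.span_le.mpr hmap this

lemma AMP_eq_primary_of_endpoint_zero {W : Submodule ℂ (X → ℂ)} (hirr : S.IsIrr x W)
    (h0 : S.endpoint x W = 0) : W = S.primary x := by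
  have hne := AMP_supp_nonempty S x hirr.2.1
  have h0mem : (0 : ℕ) ∈ S.supp x W := h0 ▸ Nat.sInf_mem hne
  obtain ⟨w, hwW, hw0⟩ : ∃ w ∈ W, S.Estar x 0 *ᵥ w ≠ 0 := by
    by_contra h
    push_neg at h
    rcases h0mem with ⟨_, hmap⟩
    apply hmap
    rw [Submodule.eq_bot_iff]
    rintro y ⟨v, hv, rfl⟩
    simpa [Matrix.mulVecLin_apply] using h v hv
  have hE0 : S.Estar x 0 *ᵥ w = w x • xhat x := by
    funext y
    rw [AMP_Estar_mulVec]
    have : S.AM 0 x y = if y = x then 1 else 0 := by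
      rw [AMP_AM_of_le S (Nat.zero_le D)]
      have : S.A ⟨0, Nat.lt_succ_of_le (Nat.zero_le D)⟩ = S.A 0 := rfl
      rw [this, S.A_zero, Matrix.one_apply]
      by_cases h : y = x
      · subst h; simp
      · rw [if_neg (fun hh => h hh.symm), if_neg h]
    rw [this]
    simp only [Pi.smul_apply, xhat, Pi.single_apply, smul_eq_mul]
    by_cases h : y = x
    · subst h; simp
    · simp [h]
  have hxhat : xhat x ∈ W := by
    have hW0 : S.Estar x 0 *ᵥ w ∈ W := hirr.1 _ (AMP_Estar_mem S x 0) w hwW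
    have hwx : w x ≠ 0 := by
      intro h
      apply hw0
      rw [hE0, h, zero_smul]
    have hmem := W.smul_mem (w x)⁻¹ hW0
    rw [hE0, smul_smul, inv_mul_cancel₀ hwx, one_smul] at hmem
    exact hmem
  have hprim_le : S.primary x ≤ W := by
    rw [AssocScheme.primary]
    apply Submodule.span_le.mpr
    rintro _ ⟨j, rfl⟩
    exact hirr.1 _ (AMP_A_mem S x j) _ hxhat
  rcases hirr.2.2 _ hprim_le (AMP_primary_TSub S x) with hbot | heq
  · exfalso
    have : xhat x ∈ S.primary x := by
      have : (S.A 0).mulVec (xhat x) ∈ S.primary x := Submodule.subset_span ⟨0, rfl⟩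
      rwa [S.A_zero, Matrix.one_mulVec] at this
    rw [hbot] at this
    exact AMP_xhat_ne_zero x (by simpa using this)
  · exact heq.symm

end AMP3
section AMP4

open AssocScheme Finset

variable {X : Type*} [Fintype X] [DecidableEq X] {D : ℕ} (S : AssocScheme X D) (x : X)

lemma AMP_low_kill (hS : S.IsMetric) {l : ℕ} {v : X → ℂ}
    (hv : ∀ i < l, S.Estar x i *ᵥ v = 0) {i : ℕ} (hi : i + 1 < l) :
    S.Estar x i *ᵥ (S.A 1 *ᵥ v) = 0 := by
  conv_lhs => rw [← AMP_sum_Estar_mulVec S x v]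
  rw [AMP_mulVec_sum, AMP_mulVec_sum]
  apply Finset.sum_eq_zero
  intro k _
  by_cases hkl : k < l
  · rw [hv k hkl, Matrix.mulVec_zero, Matrix.mulVec_zero]
  · exact AMP_tri_kill S x hS (Or.inl (by omega)) v

lemma AMP_key_l (hS : S.IsMetric) {l : ℕ} {v : X → ℂ}
    (hv : ∀ i < l, S.Estar x i *ᵥ v = 0) (hl : 1 ≤ l) :
    S.Estar x (l-1) *ᵥ (S.A 1 *ᵥ v)
      = S.Estar x (l-1) *ᵥ (S.A 1 *ᵥ (S.Estar x l *ᵥ v)) := by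
  have hsum : ∑ k ∈ Finset.range (D+1), S.Estar x (l-1) *ᵥ (S.A 1 *ᵥ (S.Estar x k *ᵥ v))
      = S.Estar x (l-1) *ᵥ (S.A 1 *ᵥ (S.Estar x l *ᵥ v)) := by
    apply Finset.sum_eq_single
    · intro k _ hkl
      by_cases h2 : k < l
      · rw [hv k h2, Matrix.mulVec_zero, Matrix.mulVec_zero]
      · exact AMP_tri_kill S x hS (Or.inl (by omega)) v
    · intro hl'
      have hD : D < l := by
        by_contra hcon
        exact hl' (Finset.mem_range.mpr (by omega))
      rw [AMP_Estar_of_gt S x hD, Matrix.zero_mulVec, Matrix.mulVec_zero, Matrix.mulVec_zero]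
  conv_lhs => rw [← AMP_sum_Estar_mulVec S x v]
  rw [AMP_mulVec_sum, AMP_mulVec_sum, hsum]

lemma AMP_stepA (hS : S.IsMetric) {W : Submodule ℂ (X → ℂ)} (hirr : S.IsIrr x W)
    (hthinW : S.IsThin x W) {w : X → ℂ} (hwW : w ∈ W) {l : ℕ}
    (hρ : S.endpoint x W < l)
    (hlow : ∀ i < l, S.Estar x i *ᵥ w = 0) (hnz : S.Estar x l *ᵥ w ≠ 0) :
    (∀ i < l - 1, S.Estar x i *ᵥ (S.A 1 *ᵥ w) = 0) ∧
      S.Estar x (l - 1) *ᵥ (S.A 1 *ᵥ w) ≠ 0 := by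
  have hl1 : 1 ≤ l := by omega
  have hfirst : ∀ i, i < l - 1 → S.Estar x i *ᵥ (S.A 1 *ᵥ w) = 0 := by
    intro i hi
    exact AMP_low_kill S x hS hlow (by omega)
  refine ⟨hfirst, ?_⟩
  intro hzero
  set W' : Submodule ℂ (X → ℂ) :=
    W ⊓ (⨅ i ∈ Finset.range l, LinearMap.ker (S.Estar x i).mulVecLin) with hW'def
  have hmemW' : ∀ v, v ∈ W' ↔ v ∈ W ∧ ∀ i < l, S.Estar x i *ᵥ v = 0 := by
    intro v
    simp [hW'def, Submodule.mem_inf, Submodule.mem_iInf, LinearMap.mem_ker,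
      Matrix.mulVecLin_apply, Finset.mem_range]
  have hwW' : w ∈ W' := (hmemW' w).mpr ⟨hwW, hlow⟩
  have hinv1 : ∀ v ∈ W', S.A 1 *ᵥ v ∈ W' := by
    intro v hv
    rw [hmemW'] at hv
    obtain ⟨hvW, hvlow⟩ := hv
    rw [hmemW']
    refine ⟨hirr.1 _ (AMP_A_mem S x 1) v hvW, fun i hi => ?_⟩
    by_cases h2 : i + 1 < l
    · exact AMP_low_kill S x hS hvlow h2
    · have hieq : i = l - 1 := by omega
      subst hieq
      have hfr := hthinW l
      have hemem : S.Estar x l *ᵥ w ∈ Submodule.map (S.Estar x l).mulVecLin W := by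
        have := Submodule.mem_map_of_mem (f := (S.Estar x l).mulVecLin) hwW
        simpa [Matrix.mulVecLin_apply] using this
      have hvmem : S.Estar x l *ᵥ v ∈ Submodule.map (S.Estar x l).mulVecLin W := by
        have := Submodule.mem_map_of_mem (f := (S.Estar x l).mulVecLin) hvW
        simpa [Matrix.mulVecLin_apply] using this
      obtain ⟨c, hc⟩ := AMP_eq_smul_of_finrank_le_one hfr hemem hnz hvmem
      rw [AMP_key_l S x hS hvlow hl1, hc, Matrix.mulVec_smul, Matrix.mulVec_smul,
        ← AMP_key_l S x hS hlow hl1, hzero, smul_zero]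
  have hinvE : ∀ k : Fin (D+1), ∀ v ∈ W', S.Estar x (k : ℕ) *ᵥ v ∈ W' := by
    intro k v hv
    rw [hmemW'] at hv ⊢
    refine ⟨hirr.1 _ (AMP_Estar_mem S x (k : ℕ)) v hv.1, fun i hi => ?_⟩
    by_cases hik : i = (k : ℕ)
    · subst hik
      rw [AMP_Estar_Estar_self, hv.2 _ hi]
    · rw [AMP_Estar_Estar_ne S x hik]
  have hTW' : S.IsTSub x W' := AMP_isTSub_of_gens S x (AMP_adjA1_stab S hS hinv1) hinvE
  have hW'W : W' = W := by
    rcases hirr.2.2 W' inf_le_left hTW' with hbot | h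
    · exfalso
      rw [hbot] at hwW'
      have hw0 : w = 0 := by simpa using hwW'
      exact hnz (by rw [hw0, Matrix.mulVec_zero])
    · exact h
  have hne := AMP_supp_nonempty S x hirr.2.1
  obtain ⟨hD, hmap⟩ := Nat.sInf_mem hne
  apply hmap
  rw [Submodule.eq_bot_iff]
  rintro y ⟨v, hvW, rfl⟩
  have hv' : v ∈ W' := by rw [hW'W]; exact hvW
  have := ((hmemW' v).mp hv').2 (S.endpoint x W) hρ
  simpa [Matrix.mulVecLin_apply, AssocScheme.endpoint] using this

lemma AMP_crux (hS : S.IsMetric) {W : Submodule ℂ (X → ℂ)} (hirr : S.IsIrr x W)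
    (hthinW : S.IsThin x W) (hρ1 : 1 ≤ S.endpoint x W)
    {u : X → ℂ} (huW : u ∈ W) {δ : ℕ}
    (hlowδ : ∀ i < δ, S.Estar x i *ᵥ u = 0)
    (hB : ∃ B : Finset (Fin (D+1)),
      (∀ j : Fin (D+1), S.EM (j : ℕ) *ᵥ u ≠ 0 → j ∈ B) ∧
      (B.card : ℤ) ≤ (δ : ℤ) - (S.endpoint x W : ℤ)) :
    u = 0 := by
  by_contra hu0
  obtain ⟨B, hBmem, hBcard⟩ := hB
  have hsuppne := AMP_supp_nonempty S x hirr.2.1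
  set ρ := S.endpoint x W with hρdef
  set l := sInf {i | S.Estar x i *ᵥ u ≠ 0} with hldef
  have hlne : {i | S.Estar x i *ᵥ u ≠ 0}.Nonempty := by
    by_contra h
    rw [Set.not_nonempty_iff_eq_empty] at h
    apply hu0
    rw [← AMP_sum_Estar_mulVec S x u]
    refine Finset.sum_eq_zero fun i _ => ?_
    by_contra h2
    exact (h ▸ (Set.mem_setOf.mpr h2) : i ∈ (∅ : Set ℕ))
  have hlnz : S.Estar x l *ᵥ u ≠ 0 := Nat.sInf_mem hlne
  have hllow : ∀ i < l, S.Estar x i *ᵥ u = 0 := by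
    intro i hi
    by_contra h
    have hle : l ≤ i := Nat.sInf_le (show i ∈ {i | S.Estar x i *ᵥ u ≠ 0} from h)
    omega
  have hδl : δ ≤ l := by
    by_contra h
    exact hlnz (hlowδ l (by omega))
  have hρl : ρ ≤ l := by
    by_contra h
    exact hlnz (AMP_Estar_zero_of_lt_endpoint S x hsuppne (by omega) huW)
  set f : ℕ → (X → ℂ) := fun m => (fun v => S.A 1 *ᵥ v)^[m] u with hfdef
  have hf0 : f 0 = u := rfl
  have hfstep : ∀ m, f (m+1) = S.A 1 *ᵥ f m := fun m => Function.iterate_succ_apply' _ _ _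
  have hfW : ∀ m, f m ∈ W := by
    intro m
    induction m with
    | zero => exact huW
    | succ m ih => rw [hfstep]; exact hirr.1 _ (AMP_A_mem S x 1) _ ih
  have hmin : ∀ m, m ≤ l - ρ →
      (∀ i < l - m, S.Estar x i *ᵥ f m = 0) ∧ S.Estar x (l - m) *ᵥ f m ≠ 0 := by
    intro m
    induction m with
    | zero =>
      intro _
      exact ⟨fun i hi => hllow i (by omega), by simpa [hf0] using hlnz⟩
    | succ m ih =>
      intro hm
      obtain ⟨h1, h2⟩ := ih (by omega)
      have hρlt : ρ < l - m := by omega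
      have hstep := AMP_stepA S x hS hirr hthinW (hfW m) hρlt h1 h2
      have harith : l - (m+1) = (l - m) - 1 := by omega
      rw [hfstep, harith]
      exact hstep
  obtain ⟨q, hq⟩ := S.A_in_E 1
  have heig : ∀ j : Fin (D+1), S.A 1 *ᵥ (S.EM (j:ℕ) *ᵥ u) = q j • (S.EM (j:ℕ) *ᵥ u) := by
    intro j
    rw [Matrix.mulVec_mulVec, AMP_EM_coe, hq]
    have hprod : (∑ i, q i • S.E i) * S.E j = q j • S.E j := by
      rw [Finset.sum_mul, Finset.sum_eq_single j]
      · rw [smul_mul_assoc, S.E_idem j j, if_pos rfl]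
      · intro i _ hij
        rw [smul_mul_assoc, S.E_idem i j, if_neg hij, smul_zero]
      · intro h; exact absurd (Finset.mem_univ j) h
    rw [hprod, Matrix.smul_mulVec]
  have hcoef : ∀ m, ∃ c : Fin (D+1) → ℂ, f m = ∑ j : Fin (D+1), c j • (S.EM (j:ℕ) *ᵥ u) := by
    intro m
    induction m with
    | zero =>
      refine ⟨fun _ => 1, ?_⟩
      rw [hf0]
      simp only [one_smul]
      have hs : ∑ j : Fin (D+1), S.EM (j:ℕ) *ᵥ u = ∑ j ∈ Finset.range (D+1), S.EM j *ᵥ u :=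
        Fin.sum_univ_eq_sum_range (fun j => S.EM j *ᵥ u) (D+1)
      rw [hs, ← AMP_sum_mulVec, AMP_sum_EM, Matrix.one_mulVec]
    | succ m ih =>
      obtain ⟨c, hc⟩ := ih
      refine ⟨fun j => c j * q j, ?_⟩
      rw [hfstep, hc, AMP_mulVec_sum]
      refine Finset.sum_congr rfl fun j _ => ?_
      rw [Matrix.mulVec_smul, heig j, smul_smul]
  classical
  set P := Submodule.span ℂ
    ((B.image (fun j : Fin (D+1) => S.EM (j:ℕ) *ᵥ u) : Finset (X → ℂ)) : Set (X → ℂ)) with hPdef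
  have hfP : ∀ m, f m ∈ P := by
    intro m
    obtain ⟨c, hc⟩ := hcoef m
    rw [hc]
    refine Submodule.sum_mem _ fun j _ => ?_
    by_cases h : S.EM (j:ℕ) *ᵥ u = 0
    · rw [h, smul_zero]; exact Submodule.zero_mem _
    · exact Submodule.smul_mem _ _ (Submodule.subset_span
        (Finset.mem_coe.mpr (Finset.mem_image_of_mem _ (hBmem j h))))
  set N := l - ρ with hNdef
  have hli : LinearIndependent ℂ (fun m : Fin (N+1) => f m) := by
    rw [Fintype.linearIndependent_iff]
    intro g hg
    by_contra hgne
    push_neg at hgne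
    obtain ⟨m1, hm1⟩ := hgne
    set s : Finset (Fin (N+1)) := Finset.univ.filter (fun m => g m ≠ 0) with hsdef
    have hsne : s.Nonempty := ⟨m1, by simp [hsdef, hm1]⟩
    set m0 := s.max' hsne with hm0def
    have hm0s : m0 ∈ s := s.max'_mem hsne
    have hgm0 : g m0 ≠ 0 := by simpa [hsdef] using hm0s
    have hm0le : (m0 : ℕ) ≤ N := Fin.is_le m0
    have happ := congrArg (fun v => S.Estar x (l - (m0:ℕ)) *ᵥ v) hg
    rw [AMP_mulVec_sum, Matrix.mulVec_zero] at happ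
    have hsingle : ∑ m : Fin (N+1), S.Estar x (l - (m0:ℕ)) *ᵥ (g m • f m)
        = g m0 • (S.Estar x (l - (m0:ℕ)) *ᵥ f m0) := by
      rw [Finset.sum_eq_single m0]
      · rw [Matrix.mulVec_smul]
      · intro m _ hm
        by_cases hgm : g m = 0
        · rw [hgm, zero_smul, Matrix.mulVec_zero]
        · have hms : m ∈ s := by simp [hsdef, hgm]
          have hmle : m ≤ m0 := s.le_max' m hms
          have hmlt : (m : ℕ) < (m0 : ℕ) := Fin.lt_def.mp (lt_of_le_of_ne hmle hm)
          rw [Matrix.mulVec_smul,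
            (hmin (m:ℕ) (by omega)).1 (l - (m0:ℕ)) (by omega), smul_zero]
      · intro h; exact absurd (Finset.mem_univ m0) h
    rw [hsingle] at happ
    rcases smul_eq_zero.mp happ with h | h
    · exact hgm0 h
    · exact (hmin (m0:ℕ) (by omega)).2 h
  have hspan_le : Submodule.span ℂ (Set.range (fun m : Fin (N+1) => f m)) ≤ P := by
    rw [Submodule.span_le]
    rintro _ ⟨m, rfl⟩
    exact hfP m
  have hfr1 : Module.finrank ℂ
      (Submodule.span ℂ (Set.range (fun m : Fin (N+1) => f m))) = N + 1 := by
    rw [finrank_span_eq_card hli]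
    simp
  have hfr2 : Module.finrank ℂ P ≤ B.card := by
    have h1 : Module.finrank ℂ P ≤ (B.image (fun j : Fin (D+1) => S.EM (j:ℕ) *ᵥ u)).card :=
      finrank_span_finset_le_card _
    exact h1.trans Finset.card_image_le
  have hmono := Submodule.finrank_mono hspan_le
  have hle1 : N + 1 ≤ B.card := by omega
  have hle2 : (N:ℤ) + 1 ≤ (δ:ℤ) - (ρ:ℤ) := le_trans (by exact_mod_cast hle1) hBcard
  omega

lemma AMP_decomp (N : ℕ) : ∀ (U : Submodule ℂ (X → ℂ)),
    Module.finrank ℂ U ≤ N → S.IsTSub x U →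
    ∃ (n : ℕ) (Wf : Fin n → Submodule ℂ (X → ℂ)),
      (∀ k, S.IsIrr x (Wf k)) ∧ (∀ k, Wf k ≤ U) ∧
      (∀ k m, k ≠ m → ∀ v ∈ Wf k, ∀ w ∈ Wf m, dotc v w = 0) ∧
      (∀ u ∈ U, ∃ c : Fin n → (X → ℂ), (∀ k, c k ∈ Wf k) ∧ u = ∑ k, c k) := by
  induction N with
  | zero =>
    intro U hU _
    have hbot : U = ⊥ := by
      rw [← Submodule.finrank_eq_zero (R := ℂ)]
      omega
    refine ⟨0, Fin.elim0, fun k => k.elim0, fun k => k.elim0, fun k => k.elim0, ?_⟩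
    intro u hu
    rw [hbot, Submodule.mem_bot] at hu
    exact ⟨Fin.elim0, fun k => k.elim0, by rw [hu]; simp⟩
  | succ N ih =>
    intro U hU hTU
    by_cases hUbot : U = ⊥
    · subst hUbot
      refine ⟨0, Fin.elim0, fun k => k.elim0, fun k => k.elim0, fun k => k.elim0, ?_⟩
      intro u hu
      rw [Submodule.mem_bot] at hu
      exact ⟨Fin.elim0, fun k => k.elim0, by rw [hu]; simp⟩
    · have hsetne : {m : ℕ | ∃ W : Submodule ℂ (X → ℂ),
          S.IsTSub x W ∧ W ≤ U ∧ W ≠ ⊥ ∧ Module.finrank ℂ W = m}.Nonempty :=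
        ⟨Module.finrank ℂ U, U, hTU, le_rfl, hUbot, rfl⟩
      obtain ⟨W, hTW, hWU, hWbot, hWrank⟩ := Nat.sInf_mem hsetne
      have hirrW : S.IsIrr x W := by
        refine ⟨hTW, hWbot, fun W' hW'le hTW' => ?_⟩
        by_cases h' : W' = ⊥
        · exact Or.inl h'
        · refine Or.inr ?_
          have hge : sInf {m : ℕ | ∃ W : Submodule ℂ (X → ℂ),
              S.IsTSub x W ∧ W ≤ U ∧ W ≠ ⊥ ∧ Module.finrank ℂ W = m} ≤ Module.finrank ℂ W' :=
            Nat.sInf_le ⟨W', hTW', hW'le.trans hWU, h', rfl⟩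
          exact Submodule.eq_of_le_of_finrank_le hW'le (by omega)
      have hTU' : S.IsTSub x (U ⊓ AMPorthc W) := by
        intro F hF v hv
        rw [Submodule.mem_inf] at hv ⊢
        refine ⟨hTU F hF v hv.1, ?_⟩
        intro w hw
        rw [AMP_dotc_mulVec]
        exact hv.2 _ (hTW (star F) (AMP_star_mem_Talg S x hF) w hw)
      have hlt : U ⊓ AMPorthc W < U := by
        rcases lt_or_eq_of_le (inf_le_left : U ⊓ AMPorthc W ≤ U) with h | h
        · exact h
        · exfalso
          apply hWbot
          rw [Submodule.eq_bot_iff]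
          intro w hw
          have hwU' : w ∈ U ⊓ AMPorthc W := by rw [h]; exact hWU hw
          exact AMP_dotc_self_eq_zero ((Submodule.mem_inf.mp hwU').2 w hw)
      have hrank : Module.finrank ℂ ↥(U ⊓ AMPorthc W) ≤ N := by
        have := Submodule.finrank_lt_finrank_of_lt hlt
        have h2 := Submodule.finrank_mono (le_of_lt hlt)
        omega
      obtain ⟨n, Wf, h1, h2, h3, h4⟩ := ih (U ⊓ AMPorthc W) hrank hTU'
      refine ⟨n+1, Fin.cons W Wf, ?_, ?_, ?_, ?_⟩
      · intro k
        refine Fin.cases ?_ ?_ k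
        · simpa using hirrW
        · intro k'
          simpa using h1 k'
      · intro k
        refine Fin.cases ?_ ?_ k
        · simpa using hWU
        · intro k'
          have := (h2 k').trans (inf_le_left : U ⊓ AMPorthc W ≤ U)
          simpa using this
      · intro k m hkm v hv w hw
        rcases Fin.eq_zero_or_eq_succ k with hk0 | ⟨k', rfl⟩
        · subst hk0
          rcases Fin.eq_zero_or_eq_succ m with hm0 | ⟨m', rfl⟩
          · subst hm0
            exact absurd rfl hkm
          · rw [Fin.cons_zero] at hv
            rw [Fin.cons_succ] at hw
            have hworthc : w ∈ AMPorthc W := (Submodule.mem_inf.mp ((h2 m') hw)).2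
            rw [AMP_dotc_star, hworthc v hv, star_zero]
        · rcases Fin.eq_zero_or_eq_succ m with hm0 | ⟨m', rfl⟩
          · subst hm0
            rw [Fin.cons_succ] at hv
            rw [Fin.cons_zero] at hw
            exact (Submodule.mem_inf.mp ((h2 k') hv)).2 w hw
          · rw [Fin.cons_succ] at hv hw
            refine h3 k' m' (fun hne => hkm ?_) v hv w hw
            rw [hne]
      · intro u hu
        obtain ⟨w0, hw0W, hz0⟩ := AMP_exists_orth_decomp W u
        have hz0U : u - w0 ∈ U ⊓ AMPorthc W :=
          Submodule.mem_inf.mpr ⟨U.sub_mem hu (hWU hw0W), hz0⟩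
        obtain ⟨c, hc, hcsum⟩ := h4 _ hz0U
        refine ⟨Fin.cons w0 c, ?_, ?_⟩
        · intro k
          refine Fin.cases ?_ ?_ k
          · simpa using hw0W
          · intro k'
            simpa using hc k'
        · rw [Fin.sum_cons, ← hcsum]
          abel

end AMP4

open AssocScheme in
/-- **Corollary, metric case.** Let `χ` be a code in a metric scheme with
`δ_x = δ_x(χ)`, and let `1 ≤ t ≤ D` be such that for each irreducible `T(x)`-module `W`
with `1 ≤ r(W) ≤ t`, `#{j ∈ W_s^* : E_j χ ≠ 0} ≤ δ_x - r(W)`.  If every irreducible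
`T(x)`-module with endpoint at most `t` is thin, then `F χ` is a relative `t`-codesign
with respect to `x` for every `F ∈ T(x)`. -/
theorem assmus_mattson_cor_P
    {X : Type*} [Fintype X] [DecidableEq X] {D : ℕ}
    (S : AssocScheme X D) (hS : S.IsMetric) (x : X)
    (χ : X → ℂ) (hχ : S.IsCode χ) (t : ℕ) (ht1 : 1 ≤ t) (htD : t ≤ D)
    (hcount : ∀ W : Submodule ℂ (X → ℂ), S.IsIrr x W →
      1 ≤ S.endpoint x W → S.endpoint x W ≤ t →
      (({j ∈ S.dualSupp W | (S.EM j).mulVec χ ≠ 0}.ncard : ℤ)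
        ≤ (S.deltaX x χ : ℤ) - (S.endpoint x W : ℤ)))
    (hthin : ∀ W : Submodule ℂ (X → ℂ), S.IsIrr x W → S.endpoint x W ≤ t → S.IsThin x W) :
    ∀ F ∈ S.Talg x, S.RelCodesign x t (F.mulVec χ) := by
  classical
  set δ := S.deltaX x χ with hδdef
  set Tar : Submodule ℂ (X → ℂ) := ⨅ (F : Matrix X X ℂ) (_ : F ∈ S.Talg x) (i : ℕ)
      (_ : 1 ≤ i) (_ : i ≤ t),
    Submodule.comap ((S.Estar x i).mulVecLin.comp F.mulVecLin)
      (Submodule.span ℂ {(S.AM i).mulVec (xhat x)}) with hTardef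
  have hmemTar : ∀ v : X → ℂ, v ∈ Tar ↔ ∀ F ∈ S.Talg x, ∀ i : ℕ, 1 ≤ i → i ≤ t →
      S.Estar x i *ᵥ (F *ᵥ v) ∈ Submodule.span ℂ ({(S.AM i).mulVec (xhat x)} : Set (X → ℂ)) := by
    intro v
    simp [hTardef, Submodule.mem_iInf, Submodule.mem_comap, LinearMap.comp_apply,
      Matrix.mulVecLin_apply]
  suffices hχT : χ ∈ Tar by
    intro F hF
    show ∀ i : ℕ, 1 ≤ i → i ≤ t →
      ∃ c : ℂ, (S.Estar x i).mulVec (F.mulVec χ) = c • (S.AM i).mulVec (xhat x)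
    intro i hi1 hit
    have hmem := (hmemTar χ).mp hχT F hF i hi1 hit
    rw [Submodule.mem_span_singleton] at hmem
    obtain ⟨c, hc⟩ := hmem
    exact ⟨c, hc.symm⟩
  have hT : S.IsTSub x ⊤ := fun F _ v _ => trivial
  obtain ⟨n, Wf, hirr, hWle, horth, hrep⟩ :=
    AMP_decomp S x (Module.finrank ℂ (⊤ : Submodule ℂ (X → ℂ))) ⊤ le_rfl hT
  obtain ⟨c, hcW, hcsum⟩ := hrep χ trivial
  have htrans : ∀ (k : Fin n), ∀ M ∈ S.Talg x, M *ᵥ χ = 0 → M *ᵥ c k = 0 := by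
    intro k M hM h0
    have hMc : ∀ m : Fin n, M *ᵥ c m ∈ Wf m := fun m => (hirr m).1 M hM _ (hcW m)
    have hsum0 : ∑ m, M *ᵥ c m = 0 := by
      rw [← AMP_mulVec_sum, ← hcsum, h0]
    have h1 : ∑ m, dotc (M *ᵥ c m) (M *ᵥ c k) = 0 := by
      rw [← AMP_dotc_sum, hsum0, AMP_dotc_zero]
    have h2 : ∑ m, dotc (M *ᵥ c m) (M *ᵥ c k) = dotc (M *ᵥ c k) (M *ᵥ c k) :=
      Finset.sum_eq_single k (fun m _ hmk => horth m k hmk _ (hMc m) _ (hMc k))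
        (fun h => absurd (Finset.mem_univ k) h)
    exact AMP_dotc_self_eq_zero (h2 ▸ h1)
  have hEχ : ∀ i : ℕ, 1 ≤ i → i < δ → S.Estar x i *ᵥ χ = 0 := by
    intro i hi1 hi2
    by_contra h
    have hmem : i ∈ {i : ℕ | i ≠ 0 ∧ (S.Estar x i).mulVec χ ≠ 0} := ⟨by omega, h⟩
    have hlei : S.deltaX x χ ≤ i := Nat.sInf_le hmem
    rw [← hδdef] at hlei
    omega
  have hcomp : ∀ k : Fin n, c k ∈ Tar := by
    intro k
    rcases Nat.lt_or_ge (S.endpoint x (Wf k)) 1 with h0 | h1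
    · have heq := AMP_eq_primary_of_endpoint_zero S x (hirr k) (by omega)
      rw [hmemTar]
      intro F hF i hi1 hit
      have hck : c k ∈ S.primary x := heq ▸ hcW k
      have hFc : F *ᵥ c k ∈ S.primary x := AMP_primary_TSub S x F hF _ hck
      exact AMP_Estar_primary S x i hFc
    · rcases le_or_gt (S.endpoint x (Wf k)) t with hlet | hgt
      · have hzero : c k = 0 := by
          apply AMP_crux S x hS (hirr k) (hthin (Wf k) (hirr k) hlet) h1 (hcW k) (δ := δ)
          · intro i hi
            by_cases hi0 : i = 0
            · subst hi0
              exact AMP_Estar_zero_of_lt_endpoint S x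
                (AMP_supp_nonempty S x (hirr k).2.1) (by omega) (hcW k)
            · exact htrans k _ (AMP_Estar_mem S x i) (hEχ i (by omega) hi)
          · refine ⟨Finset.univ.filter (fun j : Fin (D+1) => S.EM (j:ℕ) *ᵥ c k ≠ 0),
              fun j hj => Finset.mem_filter.mpr ⟨Finset.mem_univ j, hj⟩, ?_⟩
            set B := Finset.univ.filter (fun j : Fin (D+1) => S.EM (j:ℕ) *ᵥ c k ≠ 0) with hBdef
            have hsub : ((B.image (fun j : Fin (D+1) => (j : ℕ))) : Set ℕ)
                ⊆ {j | j ∈ S.dualSupp (Wf k) ∧ (S.EM j).mulVec χ ≠ 0} := by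
              intro j hj
              simp only [Finset.coe_image, Set.mem_image, Finset.mem_coe] at hj
              obtain ⟨j', hj', rfl⟩ := hj
              rw [hBdef, Finset.mem_filter] at hj'
              have hne : S.EM (j':ℕ) *ᵥ c k ≠ 0 := hj'.2
              constructor
              · refine ⟨Nat.lt_succ_iff.mp j'.isLt, ?_⟩
                intro hbot
                apply hne
                have hmm : (S.EM (j':ℕ)).mulVecLin (c k)
                    ∈ Submodule.map (S.EM (j':ℕ)).mulVecLin (Wf k) :=
                  Submodule.mem_map_of_mem (hcW k)
                rw [hbot] at hmm
                simpa [Matrix.mulVecLin_apply] using hmm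
              · intro hχ0
                exact hne (htrans k _ (AMP_EM_mem S x (j':ℕ)) hχ0)
            have hfin : {j | j ∈ S.dualSupp (Wf k) ∧ (S.EM j).mulVec χ ≠ 0}.Finite :=
              Set.Finite.subset (Set.finite_Iic D) (fun j hj => hj.1.1)
            have hcard1 : B.card = (B.image (fun j : Fin (D+1) => (j:ℕ))).card :=
              (Finset.card_image_of_injective _ Fin.val_injective).symm
            have hcard2 : ((B.image (fun j : Fin (D+1) => (j:ℕ))) : Set ℕ).ncard
                ≤ {j | j ∈ S.dualSupp (Wf k) ∧ (S.EM j).mulVec χ ≠ 0}.ncard :=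
              Set.ncard_le_ncard hsub hfin
            rw [Set.ncard_coe_finset] at hcard2
            have hcount' := hcount (Wf k) (hirr k) h1 hlet
            calc (B.card : ℤ)
                = ((B.image (fun j : Fin (D+1) => (j:ℕ))).card : ℤ) := by
                  exact_mod_cast congrArg Nat.cast hcard1
              _ ≤ ({j | j ∈ S.dualSupp (Wf k) ∧ (S.EM j).mulVec χ ≠ 0}.ncard : ℤ) := by
                  exact_mod_cast hcard2
              _ ≤ (δ : ℤ) - (S.endpoint x (Wf k) : ℤ) := hcount'
        rw [hzero]
        exact Submodule.zero_mem _
      · rw [hmemTar]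
        intro F hF i hi1 hit
        have hFc : F *ᵥ c k ∈ Wf k := (hirr k).1 F hF _ (hcW k)
        have h0 : S.Estar x i *ᵥ (F *ᵥ c k) = 0 :=
          AMP_Estar_zero_of_lt_endpoint S x
            (AMP_supp_nonempty S x (hirr k).2.1) (by omega) hFc
        rw [h0]
        exact Submodule.zero_mem _
  rw [hcsum]
  exact Submodule.sum_mem _ fun k _ => hcomp k
end
end

section
/- Let χ be a code in a cometric symmetric association scheme with base point x, δ^* = min{j ≠ 0 : E_jχ ≠ 0}. Suppose t ∈ {1,…,D} is such that for each irreducible T(x)-module W with dual endpoint 1 ≤ r^*(W) ≤ t, the number of i in the support of W with E_i^*χ ≠ 0 is at most δ^* − r^*(W). If every irreducible T(x)-module with dual endpoint at most t is dual thin (dim E_jW ≤ 1 for all j), then Fχ is a relative t-design with respect to x for every F ∈ T(x). -/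
open Matrix

noncomputable section

set_option linter.unusedSectionVars false
open Matrix
noncomputable section
namespace AMQ
variable {X : Type*} [Fintype X] [DecidableEq X]

def ip (u v : X → ℂ) : ℂ := ∑ y, (starRingEnd ℂ) (u y) * v y

lemma ip_add_left (u v w : X → ℂ) : ip (u + v) w = ip u w + ip v w := by
  simp [ip, add_mul, Finset.sum_add_distrib]

lemma ip_smul_left (c : ℂ) (u w : X → ℂ) : ip (c • u) w = (starRingEnd ℂ) c * ip u w := by
  simp [ip, Finset.mul_sum, mul_assoc]

lemma ip_conj (u v : X → ℂ) : (starRingEnd ℂ) (ip u v) = ip v u := by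
  simp [ip, map_sum, mul_comm]

lemma ip_self_eq_zero {v : X → ℂ} (h : ip v v = 0) : v = 0 := by
  have h2 : ∑ y, Complex.normSq (v y) = 0 := by
    have : ((∑ y, Complex.normSq (v y) : ℝ) : ℂ) = 0 := by
      rw [← h]; push_cast [ip]
      exact Finset.sum_congr rfl fun y _ => Complex.normSq_eq_conj_mul_self
    exact_mod_cast this
  funext y
  have := (Finset.sum_eq_zero_iff_of_nonneg (fun i _ => Complex.normSq_nonneg (v i))).1 h2 y (Finset.mem_univ y)
  simpa using Complex.normSq_eq_zero.1 this

lemma ip_mulVec (M : Matrix X X ℂ) (u v : X → ℂ) : ip (M *ᵥ u) v = ip u (Mᴴ *ᵥ v) := by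
  simp only [ip, mulVec, dotProduct, conjTranspose_apply, map_sum, _root_.map_mul,
    Finset.sum_mul, Finset.mul_sum]
  rw [Finset.sum_comm]
  refine Finset.sum_congr rfl fun z _ => Finset.sum_congr rfl fun y _ => ?_
  rw [show star (M y z) = (starRingEnd ℂ) (M y z) from rfl]
  ring

def perp (W : Submodule ℂ (X → ℂ)) : Submodule ℂ (X → ℂ) where
  carrier := {v | ∀ w ∈ W, ip w v = 0}
  zero_mem' := by intro w _; simp [ip]
  add_mem' := by
    intro a b ha hb w hw
    have : ip w (a + b) = ip w a + ip w b := by simp [ip, mul_add, Finset.sum_add_distrib]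
    rw [this, ha w hw, hb w hw, add_zero]
  smul_mem' := by
    intro c a ha w hw
    have : ip w (c • a) = c * ip w a := by simp [ip, Finset.mul_sum]; exact Finset.sum_congr rfl fun y _ => by ring
    rw [this, ha w hw, mul_zero]

lemma mem_perp {W : Submodule ℂ (X → ℂ)} {v : X → ℂ} : v ∈ perp W ↔ ∀ w ∈ W, ip w v = 0 := Iff.rfl

lemma ip_eq_zero_of_mem_perp {W : Submodule ℂ (X → ℂ)} {v w : X → ℂ} (hv : v ∈ perp W) (hw : w ∈ W) :
    ip v w = 0 := by
  have := hv w hw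
  have h2 := ip_conj w v
  rw [this] at h2
  simpa using h2.symm

lemma inf_perp_eq_bot (W : Submodule ℂ (X → ℂ)) : W ⊓ perp W = ⊥ := by
  rw [Submodule.eq_bot_iff]
  rintro v ⟨hv1, hv2⟩
  exact ip_self_eq_zero (hv2 v hv1)

lemma proj_exists (W : Submodule ℂ (X → ℂ)) (v : X → ℂ) : ∃ w ∈ W, v - w ∈ perp W := by
  classical
  let e : EuclideanSpace ℂ X ≃ₗ[ℂ] (X → ℂ) := WithLp.linearEquiv 2 ℂ (X → ℂ)
  have hip : ∀ (u w : X → ℂ), ip u w = inner (𝕜 := ℂ) (e.symm u) (e.symm w) := by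
    intro u w
    rw [PiLp.inner_apply]
    simp only [RCLike.inner_apply']
    rfl
  let W' : Submodule ℂ (EuclideanSpace ℂ X) := W.comap e.toLinearMap
  have hmem : ∀ a : EuclideanSpace ℂ X, a ∈ W' ↔ e a ∈ W := fun a => Iff.rfl
  have hmem' : ∀ u : X → ℂ, u ∈ W ↔ e.symm u ∈ W' := by
    intro u; rw [hmem]; simp
  refine ⟨e ((W'.orthogonalProjection (e.symm v) : W')), ?_, ?_⟩
  · exact (hmem _).1 (by simpa using Submodule.coe_mem (W'.orthogonalProjection (e.symm v)))
  · intro w hw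
    rw [hip]
    have hz : e.symm v - (W'.orthogonalProjection (e.symm v) : W') ∈ W'ᗮ :=
      Submodule.sub_starProjection_mem_orthogonal (K := W') _
    have : e.symm (v - e ((W'.orthogonalProjection (e.symm v) : W'))) =
        e.symm v - (W'.orthogonalProjection (e.symm v) : W') := by
      rw [map_sub]; simp
    rw [this]
    exact (Submodule.mem_orthogonal _ _).1 hz _ ((hmem' w).1 hw)

end AMQ
namespace AMQ
open AssocScheme
variable {X : Type*} [Fintype X] [DecidableEq X] {D : ℕ} (S : AssocScheme X D) (x : X)

lemma EM_eq (j : ℕ) (h : j < D + 1) : S.EM j = S.E ⟨j, h⟩ := dif_pos h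

lemma EM_of_gt (j : ℕ) (h : ¬ j < D + 1) : S.EM j = 0 := dif_neg h

lemma AM_eq (i : ℕ) (h : i < D + 1) : S.AM i = S.A ⟨i, h⟩ := dif_pos h

lemma AM_of_gt (i : ℕ) (h : ¬ i < D + 1) : S.AM i = 0 := dif_neg h

lemma EM_mul_EM (j k : ℕ) : S.EM j * S.EM k = if j = k then S.EM j else 0 := by
  by_cases hj : j < D + 1
  · by_cases hk : k < D + 1
    · rw [EM_eq S j hj, EM_eq S k hk, S.E_idem]
      by_cases h : j = k
      · subst h; simp [EM_eq S j hj]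
      · rw [if_neg (by simp [Fin.mk.injEq, h]), if_neg h]
    · rw [EM_of_gt S k hk, mul_zero, if_neg (by omega)]
  · rw [EM_of_gt S j hj, zero_mul]
    simp [EM_of_gt S j hj]

lemma EM_sum : ∑ j ∈ Finset.range (D + 1), S.EM j = 1 := by
  rw [Finset.sum_range fun j => S.EM j]
  rw [show ∑ j : Fin (D+1), S.EM j = ∑ j : Fin (D+1), S.E j from
    Finset.sum_congr rfl fun j _ => by rw [EM_eq S j j.isLt]]
  · exact S.E_sum

lemma sum_mulVec' {ι : Type*} {s : Finset ι} (f : ι → Matrix X X ℂ) (v : X → ℂ) :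
    (∑ j ∈ s, f j) *ᵥ v = ∑ j ∈ s, f j *ᵥ v := by
  classical
  induction s using Finset.induction_on with
  | empty => simp [zero_mulVec]
  | @insert a s ha ih => rw [Finset.sum_insert ha, Finset.sum_insert ha, add_mulVec, ih]

lemma sum_EM_mulVec (v : X → ℂ) : ∑ j ∈ Finset.range (D + 1), S.EM j *ᵥ v = v := by
  rw [← sum_mulVec', EM_sum, one_mulVec]

lemma EM_mulVec_EM (l k : ℕ) (v : X → ℂ) :
    S.EM l *ᵥ (S.EM k *ᵥ v) = if l = k then S.EM k *ᵥ v else 0 := by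
  rw [mulVec_mulVec, EM_mul_EM]
  by_cases h : l = k
  · subst h; simp
  · simp [h, zero_mulVec]

lemma spanA_mul_comm {M N : Matrix X X ℂ}
    (hM : M ∈ Submodule.span ℂ (Set.range S.A)) (hN : N ∈ Submodule.span ℂ (Set.range S.A)) :
    M * N = N * M := by
  obtain ⟨c, hc⟩ := (Submodule.mem_span_range_iff_exists_fun ℂ).1 hM
  obtain ⟨d, hd⟩ := (Submodule.mem_span_range_iff_exists_fun ℂ).1 hN
  subst hc hd
  rw [Finset.sum_mul_sum, Finset.sum_mul_sum]
  rw [Finset.sum_comm]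
  refine Finset.sum_congr rfl fun i _ => Finset.sum_congr rfl fun j _ => ?_
  rw [smul_mul_assoc, smul_mul_assoc, mul_smul_comm, mul_smul_comm, S.A_comm j i]
  rw [smul_comm]

lemma A_real (i : Fin (D + 1)) (y z : X) : (starRingEnd ℂ) (S.A i y z) = S.A i y z := by
  rcases S.A_entries i y z with h | h <;> rw [h] <;> simp

lemma A_conjTranspose (i : Fin (D + 1)) : (S.A i)ᴴ = S.A i := by
  ext y z
  rw [conjTranspose_apply, show star (S.A i z y) = (starRingEnd ℂ) (S.A i z y) from rfl,
    A_real]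
  simpa [Matrix.transpose_apply] using congrFun (congrFun (S.A_symm i).eq y) z

lemma spanA_conjTranspose {M : Matrix X X ℂ} (hM : M ∈ Submodule.span ℂ (Set.range S.A)) :
    Mᴴ ∈ Submodule.span ℂ (Set.range S.A) := by
  obtain ⟨c, hc⟩ := (Submodule.mem_span_range_iff_exists_fun ℂ).1 hM
  subst hc
  rw [conjTranspose_sum]
  refine Submodule.sum_mem _ fun i _ => ?_
  rw [conjTranspose_smul, A_conjTranspose]
  exact Submodule.smul_mem _ _ (Submodule.subset_span ⟨i, rfl⟩)

section
open scoped ComplexOrder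
lemma idem_herm {e : Matrix X X ℂ} (he : e ∈ Submodule.span ℂ (Set.range S.A))
    (hee : e * e = e) : eᴴ = e := by
  have hff : eᴴ * eᴴ = eᴴ := by rw [← conjTranspose_mul, hee]
  have hcomm : e * eᴴ = eᴴ * e := spanA_mul_comm S he (spanA_conjTranspose S he)
  have h1 : e * (e * eᴴ) = e * eᴴ := by rw [← mul_assoc, hee]
  have h2 : (e * eᴴ) * eᴴ = e * eᴴ := by rw [mul_assoc, hff]
  have h3 : (e * eᴴ) * (e * eᴴ) = e * eᴴ := by
    rw [mul_assoc, ← mul_assoc eᴴ e eᴴ, ← hcomm, mul_assoc, hff, ← mul_assoc, hee]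
  have hpH : (e - e * eᴴ)ᴴ = eᴴ - e * eᴴ := by
    rw [conjTranspose_sub, conjTranspose_mul, conjTranspose_conjTranspose]
  have hzero : (e - e * eᴴ) * (e - e * eᴴ)ᴴ = 0 := by
    rw [hpH, sub_mul, mul_sub, mul_sub, h1, h2, h3]
    simp
  have hp0 : e - e * eᴴ = 0 := by
    have h4 : ((e - e * eᴴ)ᴴ)ᴴ * (e - e * eᴴ)ᴴ = 0 := by
      rwa [conjTranspose_conjTranspose]
    have h5 := (Matrix.conjTranspose_mul_self_eq_zero (A := (e - e * eᴴ)ᴴ)).1 h4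
    exact Matrix.conjTranspose_eq_zero.1 h5
  have h6 : e = e * eᴴ := by rwa [sub_eq_zero] at hp0
  have h7 : eᴴ - e * eᴴ = 0 := by rw [← hpH, hp0, conjTranspose_zero]
  have h8 : eᴴ = e * eᴴ := by rwa [sub_eq_zero] at h7
  rw [h8, ← h6]
end

lemma E_mem_spanA (j : Fin (D + 1)) : S.E j ∈ Submodule.span ℂ (Set.range S.A) := by
  obtain ⟨q, hq⟩ := S.E_in_A j
  rw [hq]
  exact Submodule.sum_mem _ fun i _ => Submodule.smul_mem _ _ (Submodule.subset_span ⟨i, rfl⟩)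

lemma EM_herm (j : ℕ) : (S.EM j)ᴴ = S.EM j := by
  by_cases hj : j < D + 1
  · rw [EM_eq S j hj]
    exact idem_herm S (E_mem_spanA S _) (by have := S.E_idem ⟨j, hj⟩ ⟨j, hj⟩; simpa using this)
  · rw [EM_of_gt S j hj, conjTranspose_zero]

end AMQ
namespace AMQ
open AssocScheme
variable {X : Type*} [Fintype X] [DecidableEq X] {D : ℕ} (S : AssocScheme X D) (x : X)

lemma Estar_of_gt (i : ℕ) (h : ¬ i < D + 1) : S.Estar x i = 0 := by
  unfold Estar
  rw [AM_of_gt S i h]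
  simp [Matrix.diagonal_zero]

lemma Estar_herm (i : ℕ) : (S.Estar x i)ᴴ = S.Estar x i := by
  unfold Estar
  rw [Matrix.diagonal_conjTranspose]
  refine congrArg Matrix.diagonal (funext fun y => ?_)
  show star (S.AM i x y) = S.AM i x y
  by_cases h : i < D + 1
  · rw [AM_eq S i h]
    exact A_real S _ x y
  · rw [AM_of_gt S i h]; simp

/-- each vertex is in a unique relation to `x` -/
lemma rel_exists (y : X) : ∃ i : Fin (D + 1), S.A i x y = 1 := by
  by_contra h
  push_neg at h
  have h0 : ∀ i : Fin (D + 1), S.A i x y = 0 := fun i =>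
    (S.A_entries i x y).resolve_right (h i)
  have := congrFun (congrFun S.A_sum x) y
  rw [Matrix.sum_apply] at this
  simp only [of_apply] at this
  rw [Finset.sum_congr rfl fun i _ => h0 i] at this
  simp at this

def relF (y : X) : Fin (D + 1) := (rel_exists S x y).choose

lemma relF_spec (y : X) : S.A (relF S x y) x y = 1 := (rel_exists S x y).choose_spec

lemma A_entry_ne (y : X) {i : Fin (D + 1)} (h : i ≠ relF S x y) : S.A i x y = 0 := by
  by_contra hne
  have h1 : S.A i x y = 1 := (S.A_entries i x y).resolve_left hne
  have := congrFun (congrFun S.A_sum x) y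
  rw [Matrix.sum_apply] at this
  simp only [of_apply] at this
  classical
  rw [← Finset.sum_erase_add _ _ (Finset.mem_univ i)] at this
  rw [← Finset.sum_erase_add _ _ (Finset.mem_erase.2 ⟨(Ne.symm h), Finset.mem_univ (relF S x y)⟩)] at this
  rw [relF_spec S x y, h1] at this
  have hnn : ∀ j ∈ ((Finset.univ.erase i).erase (relF S x y)), (0:ℝ) ≤ (S.A j x y).re ∧ (S.A j x y).im = 0 := by
    intro j _
    rcases S.A_entries j x y with h | h <;> rw [h] <;> simp
  -- sum of entries each 0 or 1 plus 2 equals 1 : contradiction on real parts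
  have hre := congrArg Complex.re this
  simp only [Complex.add_re, Complex.one_re] at hre
  have hsum : 0 ≤ (∑ j ∈ ((Finset.univ.erase i).erase (relF S x y)), S.A j x y).re := by
    rw [Complex.re_sum]
    exact Finset.sum_nonneg fun j hj => (hnn j hj).1
  linarith
lemma AM_entry_eq (i : ℕ) (h : i < D + 1) (y : X) :
    S.AM i x y = if (⟨i, h⟩ : Fin (D + 1)) = relF S x y then 1 else 0 := by
  rw [AM_eq S i h]
  by_cases he : (⟨i, h⟩ : Fin (D + 1)) = relF S x y
  · rw [if_pos he, he, relF_spec]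
  · rw [if_neg he, A_entry_ne S x y he]

lemma Estar_mulVec_apply (i : ℕ) (v : X → ℂ) (y : X) :
    (S.Estar x i *ᵥ v) y = S.AM i x y * v y := by
  unfold Estar
  rw [Matrix.mulVec_diagonal]

/-- generators of the Terwilliger algebra -/
lemma A_mem_Talg (i : Fin (D + 1)) : S.A i ∈ S.Talg x :=
  Algebra.subset_adjoin (Set.mem_union_left _ ⟨i, rfl⟩)

lemma Estar_mem_Talg (i : ℕ) : S.Estar x i ∈ S.Talg x := by
  by_cases h : i < D + 1
  · exact Algebra.subset_adjoin (Set.mem_union_right _ ⟨⟨i, h⟩, rfl⟩)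
  · rw [Estar_of_gt S x i h]; exact Subalgebra.zero_mem _

lemma AM_mem_Talg (i : ℕ) : S.AM i ∈ S.Talg x := by
  by_cases h : i < D + 1
  · rw [AM_eq S i h]; exact A_mem_Talg S x _
  · rw [AM_of_gt S i h]; exact Subalgebra.zero_mem _

lemma EM_mem_Talg (j : ℕ) : S.EM j ∈ S.Talg x := by
  by_cases h : j < D + 1
  · rw [EM_eq S j h]
    obtain ⟨q, hq⟩ := S.E_in_A ⟨j, h⟩
    rw [hq]
    exact Subalgebra.sum_mem _ fun i _ => Subalgebra.smul_mem _ (A_mem_Talg S x i) _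
  · rw [EM_of_gt S j h]; exact Subalgebra.zero_mem _

lemma star_mem_Talg {F : Matrix X X ℂ} (hF : F ∈ S.Talg x) : Fᴴ ∈ S.Talg x := by
  induction hF using Algebra.adjoin_induction with
  | mem a ha =>
    rcases ha with ⟨i, rfl⟩ | ⟨i, rfl⟩
    · rw [A_conjTranspose]; exact A_mem_Talg S x i
    · rw [Estar_herm]; exact Estar_mem_Talg S x i
  | algebraMap r =>
    rw [Algebra.algebraMap_eq_smul_one r]
    rw [conjTranspose_smul, conjTranspose_one]
    exact Subalgebra.smul_mem _ (Subalgebra.one_mem _) _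
  | add a b ha hb iha ihb => rw [conjTranspose_add]; exact Subalgebra.add_mem _ iha ihb
  | mul a b ha hb iha ihb => rw [conjTranspose_mul]; exact Subalgebra.mul_mem _ ihb iha

lemma isTSub_of_gens {W : Submodule ℂ (X → ℂ)}
    (hA : ∀ (i : Fin (D + 1)) (v : X → ℂ), v ∈ W → S.A i *ᵥ v ∈ W)
    (hE : ∀ (i : Fin (D + 1)) (v : X → ℂ), v ∈ W → S.Estar x i *ᵥ v ∈ W) :
    S.IsTSub x W := by
  intro F hF
  induction hF using Algebra.adjoin_induction with
  | mem a ha =>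
    rcases ha with ⟨i, rfl⟩ | ⟨i, rfl⟩
    · exact fun v hv => hA i v hv
    · exact fun v hv => hE i v hv
  | algebraMap r =>
    intro v hv
    rw [Algebra.algebraMap_eq_smul_one r, Matrix.smul_mulVec, one_mulVec]
    exact Submodule.smul_mem _ _ hv
  | add a b ha hb iha ihb =>
    intro v hv
    rw [add_mulVec]
    exact Submodule.add_mem _ (iha v hv) (ihb v hv)
  | mul a b ha hb iha ihb =>
    intro v hv
    rw [← mulVec_mulVec]
    exact iha _ (ihb v hv)

lemma perp_isTSub {W : Submodule ℂ (X → ℂ)} (hW : S.IsTSub x W) : S.IsTSub x (perp W) := by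
  intro F hF v hv
  intro w hw
  have h1 : ip w (F *ᵥ v) = (starRingEnd ℂ) (ip (F *ᵥ v) w) := (ip_conj _ _).symm
  rw [ip_mulVec] at h1
  rw [h1, ip_conj]
  have h2 : Fᴴ *ᵥ w ∈ W := hW Fᴴ (star_mem_Talg S x hF) w hw
  exact hv _ h2

end AMQ
namespace AMQ
open AssocScheme
variable {X : Type*} [Fintype X] [DecidableEq X] {D : ℕ} (S : AssocScheme X D) (x : X)

lemma Astar_mulVec_apply (j : ℕ) (v : X → ℂ) (y : X) :
    (S.Astar x j *ᵥ v) y = ((Fintype.card X : ℂ) * S.EM j x y) * v y := by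
  unfold Astar
  rw [Matrix.mulVec_diagonal]

lemma EM_entry_eq (j : ℕ) (hj : j < D + 1) (q : Fin (D + 1) → ℂ)
    (hq : S.E ⟨j, hj⟩ = ∑ i, q i • S.A i) (y : X) :
    S.EM j x y = q (relF S x y) := by
  rw [EM_eq S j hj, hq]
  rw [show (∑ i, q i • S.A i) x y = ∑ i, q i * S.A i x y from by
    rw [Matrix.sum_apply]; rfl]
  rw [Finset.sum_eq_single (relF S x y)]
  · rw [relF_spec, mul_one]
  · intro i _ hne
    rw [A_entry_ne S x y hne, mul_zero]
  · intro h; exact absurd (Finset.mem_univ _) h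

lemma exists_theta (hD : 0 < D) : ∃ th : Fin (D + 1) → ℂ,
    ∀ y : X, (Fintype.card X : ℂ) * S.EM 1 x y = th (relF S x y) := by
  have h1 : (1 : ℕ) < D + 1 := by omega
  obtain ⟨q, hq⟩ := S.E_in_A ⟨1, h1⟩
  exact ⟨fun i => (Fintype.card X : ℂ) * q i, fun y => by
    rw [EM_entry_eq S x 1 h1 q hq]⟩

lemma diagonal_sum_smul (c : Fin (D + 1) → ℂ) (g : Fin (D + 1) → X → ℂ) :
    ∑ i : Fin (D + 1), c i • Matrix.diagonal (g i) =
      Matrix.diagonal (fun y => ∑ i : Fin (D + 1), c i * g i y) := by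
  have : ∀ i : Fin (D + 1), c i • Matrix.diagonal (g i) = Matrix.diagonal (fun y => c i * g i y) := by
    intro i
    rw [← Matrix.diagonal_smul]
    congr 1
  rw [Finset.sum_congr rfl fun i _ => this i]
  ext y z
  by_cases h : y = z
  · subst h
    simp only [Matrix.sum_apply, Matrix.diagonal_apply_eq]
  · simp only [Matrix.sum_apply, Matrix.diagonal_apply_ne _ h]
    exact Finset.sum_eq_zero fun i _ => rfl

lemma Astar_eq_sum_Estar (j : Fin (D + 1)) :
    ∃ c : Fin (D + 1) → ℂ, S.Astar x (j : ℕ) = ∑ i : Fin (D + 1), c i • S.Estar x (i : ℕ) := by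
  obtain ⟨q, hq⟩ := S.E_in_A j
  refine ⟨fun i => (Fintype.card X : ℂ) * q i, ?_⟩
  unfold Astar Estar
  rw [diagonal_sum_smul]
  refine congrArg Matrix.diagonal (funext fun y => ?_)
  have hj : (j : ℕ) < D + 1 := j.isLt
  rw [EM_eq S _ hj]
  rw [show (⟨(j : ℕ), hj⟩ : Fin (D + 1)) = j from by ext; rfl]
  rw [hq]
  rw [show (∑ i, q i • S.A i) x y = ∑ i, q i * S.A i x y from by
    rw [Matrix.sum_apply]; rfl]
  rw [Finset.mul_sum]
  refine Finset.sum_congr rfl fun i _ => ?_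
  have hi : (i : ℕ) < D + 1 := i.isLt
  rw [AM_eq S _ hi]
  rw [show (⟨(i : ℕ), hi⟩ : Fin (D + 1)) = i from by ext; rfl]
  ring

lemma Astar_mem_Talg (j : Fin (D + 1)) : S.Astar x (j : ℕ) ∈ S.Talg x := by
  obtain ⟨c, hc⟩ := Astar_eq_sum_Estar S x j
  rw [hc]
  exact Subalgebra.sum_mem _ fun i _ => Subalgebra.smul_mem _ (Estar_mem_Talg S x _) _

lemma Estar_eq_sum_Astar (hX : (Fintype.card X : ℂ) ≠ 0) (i : Fin (D + 1)) :
    ∃ c : Fin (D + 1) → ℂ, S.Estar x (i : ℕ) = ∑ j : Fin (D + 1), c j • S.Astar x (j : ℕ) := by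
  obtain ⟨q, hq⟩ := S.A_in_E i
  refine ⟨fun j => q j * (Fintype.card X : ℂ)⁻¹, ?_⟩
  unfold Astar Estar
  rw [diagonal_sum_smul]
  refine congrArg Matrix.diagonal (funext fun y => ?_)
  have hi : (i : ℕ) < D + 1 := i.isLt
  rw [AM_eq S _ hi]
  rw [show (⟨(i : ℕ), hi⟩ : Fin (D + 1)) = i from by ext; rfl]
  rw [hq]
  rw [show (∑ j, q j • S.E j) x y = ∑ j, q j * S.E j x y from by
    rw [Matrix.sum_apply]; rfl]
  refine Finset.sum_congr rfl fun j _ => ?_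
  have hj : (j : ℕ) < D + 1 := j.isLt
  rw [EM_eq S _ hj]
  rw [show (⟨(j : ℕ), hj⟩ : Fin (D + 1)) = j from by ext; rfl]
  field_simp

lemma EM_Astar_EM_zero (hQ : S.IsCometric) (l k : ℕ) (h : l + 1 < k ∨ k + 1 < l) (v : X → ℂ) :
    S.EM l *ᵥ (S.Astar x 1 *ᵥ (S.EM k *ᵥ v)) = 0 := by
  have hmem : S.EM k *ᵥ v ∈ S.ESp k := ⟨v, by rw [Matrix.mulVecLin_apply]⟩
  have h2 := hQ.2 x k _ hmem
  rw [Submodule.mem_sup] at h2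
  obtain ⟨y1, hy1, z, hz, hsum⟩ := h2
  rw [Submodule.mem_sup] at hy1
  obtain ⟨a, ha, b, hb, hab⟩ := hy1
  obtain ⟨va, hva⟩ := ha
  obtain ⟨vb, hvb⟩ := hb
  obtain ⟨vz, hvz⟩ := hz
  rw [Matrix.mulVecLin_apply] at hva hvb hvz
  rw [← hsum, ← hab, mulVec_add, mulVec_add, ← hva, ← hvb, ← hvz]
  rw [EM_mulVec_EM, EM_mulVec_EM, EM_mulVec_EM]
  rw [if_neg (by omega), if_neg (by omega), if_neg (by omega)]
  simp

lemma adjoin_singleton_preserves {M : Matrix X X ℂ} {W : Submodule ℂ (X → ℂ)}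
    (hM : ∀ v ∈ W, M *ᵥ v ∈ W) {N : Matrix X X ℂ} (hN : N ∈ Algebra.adjoin ℂ {M}) :
    ∀ v ∈ W, N *ᵥ v ∈ W := by
  induction hN using Algebra.adjoin_induction with
  | mem a ha => rw [Set.mem_singleton_iff] at ha; subst ha; exact hM
  | algebraMap r =>
    intro v hv
    rw [Algebra.algebraMap_eq_smul_one r, Matrix.smul_mulVec, one_mulVec]
    exact Submodule.smul_mem _ _ hv
  | add a b ha hb iha ihb =>
    intro v hv
    rw [add_mulVec]
    exact Submodule.add_mem _ (iha v hv) (ihb v hv)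
  | mul a b ha hb iha ihb =>
    intro v hv
    rw [← mulVec_mulVec]
    exact iha _ (ihb v hv)

lemma mulVec_xhat (M : Matrix X X ℂ) (y : X) : (M *ᵥ xhat x) y = M y x := by
  unfold xhat
  show ∑ z, M y z * (Pi.single x (1:ℂ) : X → ℂ) z = M y x
  rw [Finset.sum_eq_single x]
  · rw [Pi.single_eq_same, mul_one]
  · intro z _ hz
    rw [Pi.single_eq_of_ne hz, mul_zero]
  · intro h; exact absurd (Finset.mem_univ _) h

lemma A_xy_symm (i : Fin (D + 1)) (y z : X) : S.A i y z = S.A i z y := by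
  have := congrFun (congrFun (S.A_symm i).eq y) z
  rw [Matrix.transpose_apply] at this
  exact this.symm

lemma Estar_A_xhat (i : ℕ) (i' : Fin (D + 1)) :
    S.Estar x i *ᵥ (S.A i' *ᵥ xhat x) =
      if (∃ h : i < D + 1, (⟨i, h⟩ : Fin (D + 1)) = i') then S.A i' *ᵥ xhat x else 0 := by
  by_cases hex : (∃ h : i < D + 1, (⟨i, h⟩ : Fin (D + 1)) = i')
  · rw [if_pos hex]
    obtain ⟨h, he⟩ := hex
    funext y
    rw [Estar_mulVec_apply, mulVec_xhat, A_xy_symm S i' y x, AM_entry_eq S x i h]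
    by_cases hrel : (⟨i, h⟩ : Fin (D + 1)) = relF S x y
    · rw [if_pos hrel, one_mul]
    · rw [if_neg hrel, zero_mul, ← he, A_entry_ne S x y hrel]
  · rw [if_neg hex]
    funext y
    rw [Estar_mulVec_apply, mulVec_xhat, A_xy_symm S i' y x]
    by_cases h : i < D + 1
    · rw [AM_entry_eq S x i h]
      by_cases hrel : (⟨i, h⟩ : Fin (D + 1)) = relF S x y
      · rw [if_pos hrel, one_mul]
        have hne : i' ≠ relF S x y := fun hh => hex ⟨h, by rw [hrel, hh]⟩
        rw [A_entry_ne S x y hne]; rfl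
      · rw [if_neg hrel, zero_mul]; rfl
    · rw [AM_of_gt S i h]
      show (0 : Matrix X X ℂ) x y * _ = _
      rw [Matrix.zero_apply, zero_mul]; rfl

lemma primary_isTSub : S.IsTSub x (S.primary x) := by
  apply isTSub_of_gens
  · intro i v hv
    unfold primary at hv ⊢
    induction hv using Submodule.span_induction with
    | mem v hm =>
      obtain ⟨i', rfl⟩ := hm
      rw [mulVec_mulVec]
      obtain ⟨p, hp⟩ := S.A_mul_closed i i'
      rw [hp, sum_mulVec']
      refine Submodule.sum_mem _ fun k _ => ?_
      rw [smul_mulVec]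
      exact Submodule.smul_mem _ _ (Submodule.subset_span ⟨k, rfl⟩)
    | zero => rw [mulVec_zero]; exact Submodule.zero_mem _
    | add a b _ _ iha ihb => rw [mulVec_add]; exact Submodule.add_mem _ iha ihb
    | smul c a _ iha => rw [mulVec_smul]; exact Submodule.smul_mem _ _ iha
  · intro i v hv
    unfold primary at hv ⊢
    induction hv using Submodule.span_induction with
    | mem v hm =>
      obtain ⟨i', rfl⟩ := hm
      rw [Estar_A_xhat]
      by_cases h : (∃ h : (i:ℕ) < D + 1, (⟨(i:ℕ), h⟩ : Fin (D + 1)) = i')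
      · rw [if_pos h]; exact Submodule.subset_span ⟨i', rfl⟩
      · rw [if_neg h]; exact Submodule.zero_mem _
    | zero => rw [mulVec_zero]; exact Submodule.zero_mem _
    | add a b _ _ iha ihb => rw [mulVec_add]; exact Submodule.add_mem _ iha ihb
    | smul c a _ iha => rw [mulVec_smul]; exact Submodule.smul_mem _ _ iha

lemma one_mem_primary : (fun _ => (1 : ℂ)) ∈ S.primary x := by
  have h : ∑ i : Fin (D + 1), (S.A i *ᵥ xhat x) = fun _ => (1 : ℂ) := by
    funext y
    rw [Finset.sum_apply]
    rw [Finset.sum_congr rfl fun i _ => by rw [mulVec_xhat, A_xy_symm S i y x]]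
    have := congrFun (congrFun S.A_sum x) y
    rw [Matrix.sum_apply] at this
    exact this
  rw [← h]
  exact Submodule.sum_mem _ fun i _ => Submodule.subset_span ⟨i, rfl⟩

lemma EM_primary (j : ℕ) (hj : j < D + 1) :
    ∀ m ∈ S.primary x, ∃ c : ℂ, S.EM j *ᵥ m = c • (S.EM j *ᵥ xhat x) := by
  intro m hm
  unfold primary at hm
  induction hm using Submodule.span_induction with
  | mem v hv =>
    obtain ⟨i, rfl⟩ := hv
    obtain ⟨q, hq⟩ := S.A_in_E i
    refine ⟨q ⟨j, hj⟩, ?_⟩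
    rw [mulVec_mulVec, EM_eq S j hj, hq, Finset.mul_sum]
    have : ∀ k : Fin (D + 1), S.E ⟨j, hj⟩ * q k • S.E k = if (⟨j, hj⟩ : Fin (D+1)) = k then q k • S.E k else 0 := by
      intro k
      rw [mul_smul_comm, S.E_idem]
      by_cases h : (⟨j, hj⟩ : Fin (D+1)) = k
      · rw [if_pos h, if_pos h, h]
      · rw [if_neg h, if_neg h, smul_zero]
    rw [Finset.sum_congr rfl fun k _ => this k, Finset.sum_ite_eq, if_pos (Finset.mem_univ _)]
    rw [smul_mulVec]
  | zero => exact ⟨0, by rw [mulVec_zero, zero_smul]⟩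
  | add a b _ _ iha ihb =>
    obtain ⟨c1, hc1⟩ := iha
    obtain ⟨c2, hc2⟩ := ihb
    exact ⟨c1 + c2, by rw [mulVec_add, hc1, hc2, add_smul]⟩
  | smul c a _ iha =>
    obtain ⟨c1, hc1⟩ := iha
    exact ⟨c * c1, by rw [mulVec_smul, hc1, smul_smul]⟩

lemma E0_mulVec_eq_zero {w : X → ℂ} (h : ip (fun _ => (1 : ℂ)) w = 0) : S.EM 0 *ᵥ w = 0 := by
  have h0 : (0 : ℕ) < D + 1 := by omega
  rw [EM_eq S 0 h0]
  rw [show (⟨0, h0⟩ : Fin (D + 1)) = 0 from rfl, S.E_zero]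
  have hsum : ∑ z, w z = 0 := by
    have : ip (fun _ => (1 : ℂ)) w = ∑ z, w z := by
      unfold ip; simp
    rwa [this] at h
  funext y
  rw [smul_mulVec]
  show (Fintype.card X : ℂ)⁻¹ * ((Matrix.of fun _ _ => (1:ℂ)) *ᵥ w) y = 0
  rw [show ((Matrix.of fun _ _ => (1:ℂ)) *ᵥ w) y = ∑ z, w z from by
    show ∑ z, (1 : ℂ) * w z = ∑ z, w z
    exact Finset.sum_congr rfl fun z _ => one_mul _]
  rw [hsum, mul_zero]

lemma dualSupp_nonempty {W : Submodule ℂ (X → ℂ)} (hW : W ≠ ⊥) : (S.dualSupp W).Nonempty := by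
  obtain ⟨w, hw, hw0⟩ := Submodule.exists_mem_ne_zero_of_ne_bot hW
  have hdec := sum_EM_mulVec S w
  by_contra hempty
  rw [Set.not_nonempty_iff_eq_empty] at hempty
  apply hw0
  rw [← hdec]
  refine Finset.sum_eq_zero fun j hj => ?_
  rw [Finset.mem_range] at hj
  by_contra hne
  have hmem : j ∈ S.dualSupp W := by
    refine ⟨by omega, ?_⟩
    rw [Submodule.ne_bot_iff]
    exact ⟨S.EM j *ᵥ w, ⟨w, hw, by rw [Matrix.mulVecLin_apply]⟩, hne⟩
  rw [hempty] at hmem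
  exact hmem

lemma EM_mulVec_zero_of_not_mem_dualSupp {W : Submodule ℂ (X → ℂ)} {j : ℕ} (hjD : j ≤ D)
    (hj : j ∉ S.dualSupp W) {w : X → ℂ} (hw : w ∈ W) : S.EM j *ᵥ w = 0 := by
  have hbot : Submodule.map (S.EM j).mulVecLin W = ⊥ := by
    by_contra hne
    exact hj ⟨hjD, hne⟩
  have : S.EM j *ᵥ w ∈ Submodule.map (S.EM j).mulVecLin W :=
    ⟨w, hw, by rw [Matrix.mulVecLin_apply]⟩
  rw [hbot] at this
  exact this

lemma EM_mulVec_zero_of_lt_dualEndpoint {W : Submodule ℂ (X → ℂ)} (hW : W ≠ ⊥) {j : ℕ}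
    (hj : j < S.dualEndpoint W) {w : X → ℂ} (hw : w ∈ W) : S.EM j *ᵥ w = 0 := by
  have hmem := Nat.sInf_mem (dualSupp_nonempty S hW)
  have hdef : S.dualEndpoint W = sInf (S.dualSupp W) := rfl
  rw [hdef] at hj
  have hrD : sInf (S.dualSupp W) ≤ D := hmem.1
  refine EM_mulVec_zero_of_not_mem_dualSupp S (by omega) ?_ hw
  intro hjmem
  exact absurd (Nat.sInf_le hjmem) (by omega)

lemma mem_supp_of_ne {W : Submodule ℂ (X → ℂ)} {i : ℕ} {u : X → ℂ} (hu : u ∈ W)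
    (h : S.Estar x i *ᵥ u ≠ 0) : i ∈ S.supp x W := by
  have hiD : i < D + 1 := by
    by_contra hi
    rw [Estar_of_gt S x i hi, zero_mulVec] at h
    exact h rfl
  refine ⟨by omega, ?_⟩
  rw [Submodule.ne_bot_iff]
  exact ⟨S.Estar x i *ᵥ u, ⟨u, hu, by rw [Matrix.mulVecLin_apply]⟩, h⟩

end AMQ
namespace AMQ
open AssocScheme
variable {X : Type*} [Fintype X] [DecidableEq X] {D : ℕ} (S : AssocScheme X D) (x : X)

lemma mulVec_sum_vec {ι : Type*} {s : Finset ι} (M : Matrix X X ℂ) (v : ι → X → ℂ) :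
    M *ᵥ (∑ k ∈ s, v k) = ∑ k ∈ s, M *ᵥ v k := by
  classical
  induction s using Finset.induction_on with
  | empty => simp [mulVec_zero]
  | @insert a s ha ih => rw [Finset.sum_insert ha, Finset.sum_insert ha, mulVec_add, ih]

lemma list_prod_diagonal (L : List ℕ) (g : ℕ → X → ℂ) :
    (L.map (fun i => Matrix.diagonal (g i))).prod =
      Matrix.diagonal (fun y => (L.map (fun i => g i y)).prod) := by
  induction L with
  | nil => simp
  | cons a L ih =>
    simp only [List.map_cons, List.prod_cons]
    rw [ih, Matrix.diagonal_mul_diagonal]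

lemma EM_coe (k : Fin (D + 1)) : S.EM (k : ℕ) = S.E k := by
  rw [EM_eq S _ k.isLt, Fin.eta]

lemma lowering_injective (hQ : S.IsCometric) (hD : 0 < D) (hX : (Fintype.card X : ℂ) ≠ 0)
    {W : Submodule ℂ (X → ℂ)} (hirr : S.IsIrr x W) (hthin : S.IsDualThin W) {j : ℕ}
    (hrj : S.dualEndpoint W < j) {v' : X → ℂ}
    (hv' : v' ∈ Submodule.map (S.EM j).mulVecLin W) (hv0 : v' ≠ 0) :
    S.EM (j - 1) *ᵥ (S.Astar x 1 *ᵥ v') ≠ 0 := by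
  classical
  intro hzero
  have hspan : Submodule.map (S.EM j).mulVecLin W = Submodule.span ℂ {v'} := by
    refine (Submodule.eq_of_le_of_finrank_le ((Submodule.span_singleton_le_iff_mem _ _).2 hv') ?_).symm
    rw [finrank_span_singleton hv0]
    exact hthin j
  have hlow : ∀ w ∈ W, S.EM (j - 1) *ᵥ (S.Astar x 1 *ᵥ (S.EM j *ᵥ w)) = 0 := by
    intro w hw
    have hmem : S.EM j *ᵥ w ∈ Submodule.map (S.EM j).mulVecLin W :=
      ⟨w, hw, by rw [Matrix.mulVecLin_apply]⟩
    rw [hspan, Submodule.mem_span_singleton] at hmem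
    obtain ⟨a, ha⟩ := hmem
    rw [← ha, mulVec_smul, mulVec_smul, hzero, smul_zero]
  set W'' : Submodule ℂ (X → ℂ) :=
    W ⊓ (⨅ l ∈ Finset.range j, LinearMap.ker (S.EM l).mulVecLin) with hW''
  have hmemW'' : ∀ w : X → ℂ, w ∈ W'' ↔ (w ∈ W ∧ ∀ l < j, S.EM l *ᵥ w = 0) := by
    intro w
    rw [hW'', Submodule.mem_inf]
    constructor
    · rintro ⟨h1, h2⟩
      refine ⟨h1, fun l hl => ?_⟩
      simp only [Submodule.mem_iInf] at h2
      have := h2 l (Finset.mem_range.2 hl)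
      rwa [LinearMap.mem_ker, Matrix.mulVecLin_apply] at this
    · rintro ⟨h1, h2⟩
      refine ⟨h1, ?_⟩
      simp only [Submodule.mem_iInf]
      intro l hl
      rw [LinearMap.mem_ker, Matrix.mulVecLin_apply]
      exact h2 l (Finset.mem_range.1 hl)
  have hA1 : ∀ w ∈ W'', S.Astar x 1 *ᵥ w ∈ W'' := by
    intro w hw
    rw [hmemW''] at hw ⊢
    obtain ⟨hw1, hw2⟩ := hw
    refine ⟨hirr.1 _ (Astar_mem_Talg S x ⟨1, by omega⟩) w hw1, fun l hl => ?_⟩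
    conv_lhs => rw [← sum_EM_mulVec S w, mulVec_sum_vec, mulVec_sum_vec]
    refine Finset.sum_eq_zero fun k hk => ?_
    by_cases hk1 : k < j
    · rw [hw2 k hk1, mulVec_zero, mulVec_zero]
    · by_cases hkj : k = j
      · by_cases hl1 : l = j - 1
        · rw [hl1, hkj]; exact hlow w hw1
        · rw [hkj]; exact EM_Astar_EM_zero S x hQ l j (by omega) w
      · exact EM_Astar_EM_zero S x hQ l k (by omega) w
  have hEstar : ∀ (i : Fin (D + 1)) (w : X → ℂ), w ∈ W'' → S.Estar x (i : ℕ) *ᵥ w ∈ W'' := by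
    intro i w hw
    obtain ⟨c, hc⟩ := Estar_eq_sum_Astar S x hX i
    rw [hc, sum_mulVec']
    refine Submodule.sum_mem _ fun k _ => ?_
    rw [smul_mulVec]
    exact Submodule.smul_mem _ _ (adjoin_singleton_preserves hA1 (hQ.1 x k) w hw)
  have hA : ∀ (i : Fin (D + 1)) (w : X → ℂ), w ∈ W'' → S.A i *ᵥ w ∈ W'' := by
    intro i w hw
    obtain ⟨q, hq⟩ := S.A_in_E i
    rw [hq, sum_mulVec']
    refine Submodule.sum_mem _ fun k _ => ?_
    rw [smul_mulVec]
    refine Submodule.smul_mem _ _ ?_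
    rw [← EM_coe S k]
    rw [hmemW''] at hw ⊢
    refine ⟨hirr.1 _ (EM_mem_Talg S x _) w hw.1, fun l hl => ?_⟩
    rw [EM_mulVec_EM]
    by_cases h : l = (k : ℕ)
    · rw [if_pos h, ← h, hw.2 l hl]
    · rw [if_neg h]
  have hTsub : S.IsTSub x W'' := isTSub_of_gens S x hA hEstar
  obtain ⟨w0, hw0, hv'eq⟩ := hv'
  rw [Matrix.mulVecLin_apply] at hv'eq
  have hv'W : v' ∈ W'' := by
    rw [hmemW'']
    constructor
    · rw [← hv'eq]; exact hirr.1 _ (EM_mem_Talg S x j) w0 hw0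
    · intro l hl
      rw [← hv'eq, EM_mulVec_EM, if_neg (by omega)]
  have hne : W'' ≠ ⊥ := fun h => hv0 (by rw [h] at hv'W; exact (Submodule.mem_bot ℂ).1 hv'W)
  have hle : W'' ≤ W := fun w hw => ((hmemW'' w).1 hw).1
  rcases hirr.2.2 W'' hle hTsub with hbot | heq
  · exact hne hbot
  · have hWne : W ≠ ⊥ := hirr.2.1
    have hrmem := Nat.sInf_mem (dualSupp_nonempty S hWne)
    have hdef : S.dualEndpoint W = sInf (S.dualSupp W) := rfl
    rw [← hdef] at hrmem
    apply hrmem.2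
    rw [Submodule.eq_bot_iff]
    rintro v ⟨w, hw, rfl⟩
    rw [Matrix.mulVecLin_apply]
    have hmem : w ∈ W'' := by rw [heq]; exact hw
    exact ((hmemW'' w).1 hmem).2 _ hrj

lemma step_lower (hQ : S.IsCometric) (hD : 0 < D) (hX : (Fintype.card X : ℂ) ≠ 0)
    {W : Submodule ℂ (X → ℂ)} (hirr : S.IsIrr x W) (hthin : S.IsDualThin W) {j : ℕ}
    (hrj : S.dualEndpoint W < j) (hjD : j ≤ D) (c : ℂ) {v : X → ℂ} (hv : v ∈ W)
    (hlow : ∀ l < j, S.EM l *ᵥ v = 0) (hnz : S.EM j *ᵥ v ≠ 0) :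
    ((S.Astar x 1 - c • 1) *ᵥ v) ∈ W ∧
      (∀ l < j - 1, S.EM l *ᵥ ((S.Astar x 1 - c • 1) *ᵥ v) = 0) ∧
      S.EM (j - 1) *ᵥ ((S.Astar x 1 - c • 1) *ᵥ v) ≠ 0 := by
  have hj1 : 1 ≤ j := by omega
  have hmemW : (S.Astar x 1 - c • 1) *ᵥ v ∈ W := by
    rw [Matrix.sub_mulVec]
    refine Submodule.sub_mem _ (hirr.1 _ (Astar_mem_Talg S x ⟨1, by omega⟩) v hv) ?_
    rw [smul_mulVec, one_mulVec]
    exact Submodule.smul_mem _ _ hv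
  have hcomp : ∀ l : ℕ, S.EM l *ᵥ ((S.Astar x 1 - c • 1) *ᵥ v) =
      (∑ k ∈ Finset.range (D + 1), S.EM l *ᵥ (S.Astar x 1 *ᵥ (S.EM k *ᵥ v))) -
        c • (S.EM l *ᵥ v) := by
    intro l
    rw [Matrix.sub_mulVec, Matrix.mulVec_sub]
    congr 1
    · conv_lhs => rw [show S.Astar x 1 *ᵥ v = S.Astar x 1 *ᵥ (∑ k ∈ Finset.range (D+1), S.EM k *ᵥ v) from by rw [sum_EM_mulVec S v]]
      rw [mulVec_sum_vec, mulVec_sum_vec]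
    · rw [smul_mulVec, one_mulVec, mulVec_smul]
  refine ⟨hmemW, ?_, ?_⟩
  · intro l hl
    rw [hcomp l, hlow l (by omega), smul_zero, sub_zero]
    refine Finset.sum_eq_zero fun k hk => ?_
    by_cases hkj : k < j
    · rw [hlow k hkj, mulVec_zero, mulVec_zero]
    · exact EM_Astar_EM_zero S x hQ l k (by omega) v
  · rw [hcomp (j - 1), hlow (j - 1) (by omega), smul_zero, sub_zero]
    rw [Finset.sum_eq_single j]
    · exact lowering_injective S x hQ hD hX hirr hthin hrj
        ⟨v, hv, by rw [Matrix.mulVecLin_apply]⟩ hnz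
    · intro k hk hkj
      by_cases hklt : k < j
      · rw [hlow k hklt, mulVec_zero, mulVec_zero]
      · exact EM_Astar_EM_zero S x hQ (j - 1) k (by omega) v
    · intro hj; exact absurd (Finset.mem_range.2 (by omega)) hj

lemma key_orthogonal (hQ : S.IsCometric) (hD : 0 < D) (hX : (Fintype.card X : ℂ) ≠ 0)
    (χ : X → ℂ) (hχ1 : χ ∉ S.ESp 0)
    {W : Submodule ℂ (X → ℂ)} (hirr : S.IsIrr x W) (hthin : S.IsDualThin W)
    (hr1 : 1 ≤ S.dualEndpoint W)
    (hb : (({i ∈ S.supp x W | ¬(S.Estar x i).mulVec χ = 0}.ncard : ℤ) ≤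
        (S.deltaStar χ : ℤ) - (S.dualEndpoint W : ℤ))) :
    ∀ w ∈ W, ip w χ = 0 := by
  classical
  obtain ⟨u, huW, hperp⟩ := proj_exists W χ
  suffices hu0 : u = 0 by
    intro w hw
    have h1 := hperp w hw
    rwa [hu0, sub_zero] at h1
  by_contra hu0
  have hδmem : S.deltaStar χ ∈ {j : ℕ | j ≠ 0 ∧ (S.EM j).mulVec χ ≠ 0} := by
    apply Nat.sInf_mem
    by_contra hemp
    rw [Set.not_nonempty_iff_eq_empty] at hemp
    apply hχ1
    have hall : ∀ j : ℕ, j ≠ 0 → S.EM j *ᵥ χ = 0 := by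
      intro j hj
      by_contra h
      have hmem : j ∈ {j : ℕ | j ≠ 0 ∧ (S.EM j).mulVec χ ≠ 0} := ⟨hj, h⟩
      rw [hemp] at hmem
      exact hmem
    have hcq : χ = S.EM 0 *ᵥ χ := by
      conv_lhs => rw [← sum_EM_mulVec S χ]
      rw [Finset.sum_eq_single 0]
      · intro k _ hk; exact hall k hk
      · intro h; exact absurd (Finset.mem_range.2 (by omega)) h
    exact ⟨χ, by rw [Matrix.mulVecLin_apply, ← hcq]⟩
  have hδ1 : 1 ≤ S.deltaStar χ := Nat.one_le_iff_ne_zero.2 hδmem.1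
  have hEχ : ∀ j : ℕ, j ≠ 0 → j < S.deltaStar χ → S.EM j *ᵥ χ = 0 := by
    intro j hj hlt
    by_contra h
    have h2 : S.deltaStar χ ≤ j := Nat.sInf_le ⟨hj, h⟩
    omega
  have hTW : S.IsTSub x W := hirr.1
  have hTperp : S.IsTSub x (perp W) := perp_isTSub S x hTW
  have hkill : ∀ F ∈ S.Talg x, F *ᵥ χ = 0 → F *ᵥ u = 0 := by
    intro F hF h0
    have h1 : F *ᵥ u + F *ᵥ (χ - u) = 0 := by
      rw [← mulVec_add, show u + (χ - u) = χ from by ring, h0]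
    have h2 : F *ᵥ u ∈ W := hTW F hF u huW
    have h3 : F *ᵥ (χ - u) ∈ perp W := hTperp F hF _ hperp
    have h4 : F *ᵥ u ∈ perp W := by
      rw [show F *ᵥ u = -(F *ᵥ (χ - u)) from eq_neg_of_add_eq_zero_left h1]
      exact Submodule.neg_mem _ h3
    have h5 : F *ᵥ u ∈ W ⊓ perp W := ⟨h2, h4⟩
    rw [inf_perp_eq_bot] at h5
    exact (Submodule.mem_bot ℂ).1 h5
  have hEu' : ∀ j : ℕ, j < S.deltaStar χ → S.EM j *ᵥ u = 0 := by
    intro j hlt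
    rcases Nat.eq_zero_or_pos j with h0 | hpos
    · subst h0
      exact EM_mulVec_zero_of_lt_dualEndpoint S hirr.2.1 (by omega) huW
    · exact hkill _ (EM_mem_Talg S x j) (hEχ j (by omega) hlt)
  have hj0ne : {j : ℕ | S.EM j *ᵥ u ≠ 0}.Nonempty := by
    by_contra h
    rw [Set.not_nonempty_iff_eq_empty] at h
    apply hu0
    rw [← sum_EM_mulVec S u]
    refine Finset.sum_eq_zero fun j _ => ?_
    by_contra hne
    have hmem : j ∈ {j : ℕ | S.EM j *ᵥ u ≠ 0} := hne
    rw [h] at hmem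
    exact hmem
  have hj₀mem := Nat.sInf_mem hj0ne
  set j₀ := sInf {j : ℕ | S.EM j *ᵥ u ≠ 0} with hj₀
  have hj₀min : ∀ l, l < j₀ → S.EM l *ᵥ u = 0 := by
    intro l hl
    by_contra h
    have hle := Nat.sInf_le (s := {j : ℕ | S.EM j *ᵥ u ≠ 0}) h
    rw [← hj₀] at hle
    omega
  have hj₀D : j₀ ≤ D := by
    by_contra h
    exact hj₀mem (by rw [EM_of_gt S j₀ (by omega), zero_mulVec])
  have hδj₀ : S.deltaStar χ ≤ j₀ := by
    by_contra h
    exact hj₀mem (hEu' j₀ (by omega))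
  set If : Finset ℕ := (Finset.range (D + 1)).filter (fun i => S.Estar x i *ᵥ u ≠ 0) with hIf
  have hcard : (If.card : ℤ) ≤ (S.deltaStar χ : ℤ) - (S.dualEndpoint W : ℤ) := by
    refine le_trans ?_ hb
    have hsub : (If : Set ℕ) ⊆ {i ∈ S.supp x W | ¬(S.Estar x i).mulVec χ = 0} := by
      intro i hi
      rw [Finset.mem_coe, hIf, Finset.mem_filter] at hi
      have hEiu := hi.2
      refine ⟨mem_supp_of_ne S x huW hEiu, ?_⟩
      intro h0
      exact hEiu (hkill _ (Estar_mem_Talg S x i) h0)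
    have hfin : {i ∈ S.supp x W | ¬(S.Estar x i).mulVec χ = 0}.Finite := by
      refine Set.Finite.subset (Set.finite_Icc 0 D) fun i hi => ?_
      exact ⟨by omega, hi.1.1⟩
    have hle := Set.ncard_le_ncard hsub hfin
    rw [Set.ncard_coe_finset] at hle
    exact_mod_cast hle
  have hrs : If.card + S.dualEndpoint W ≤ S.deltaStar χ := by omega
  obtain ⟨th, hth⟩ := exists_theta S x hD
  set θ : ℕ → ℂ := fun i => if h : i < D + 1 then th ⟨i, h⟩ else 0 with hθ
  set fac : ℕ → Matrix X X ℂ := fun i => S.Astar x 1 - θ i • 1 with hfacdef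
  have hfac : ∀ i : ℕ, fac i =
      Matrix.diagonal (fun y => ((Fintype.card X : ℂ) * S.EM 1 x y) - θ i) := by
    intro i
    rw [hfacdef]
    ext y z
    rcases eq_or_ne y z with h | h
    · subst h
      simp [AssocScheme.Astar, Matrix.sub_apply, Matrix.diagonal_apply_eq, Matrix.one_apply_eq]
    · simp [AssocScheme.Astar, Matrix.sub_apply, Matrix.diagonal_apply_ne _ h,
        Matrix.one_apply_ne h]
  have hNu : ((If.toList.map fac).prod) *ᵥ u = 0 := by
    rw [show If.toList.map fac = If.toList.map
        (fun i => Matrix.diagonal (fun y => ((Fintype.card X : ℂ) * S.EM 1 x y) - θ i)) from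
      List.map_congr_left fun i _ => hfac i]
    rw [list_prod_diagonal]
    funext y
    rw [Matrix.mulVec_diagonal]
    by_cases hy : u y = 0
    · rw [hy, mul_zero]; rfl
    · have hrel : ((relF S x y : ℕ)) ∈ If := by
        rw [hIf, Finset.mem_filter]
        refine ⟨Finset.mem_range.2 (relF S x y).isLt, fun h0 => hy ?_⟩
        have hc := congrFun h0 y
        rw [Estar_mulVec_apply, AM_entry_eq S x _ (relF S x y).isLt, Fin.eta,
          if_pos rfl, one_mul] at hc
        exact hc
      have h0 : (0 : ℂ) ∈ If.toList.map
          (fun i => ((Fintype.card X : ℂ) * S.EM 1 x y) - θ i) := by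
        refine List.mem_map.2 ⟨(relF S x y : ℕ), Finset.mem_toList.2 hrel, ?_⟩
        rw [hth y, hθ]
        show th (relF S x y) -
          (if h : ((relF S x y : ℕ)) < D + 1 then th ⟨(relF S x y : ℕ), h⟩ else 0) = 0
        rw [dif_pos (relF S x y).isLt, Fin.eta, sub_self]
      rw [List.prod_eq_zero h0, zero_mul]
      rfl
  have hmain : ∀ L : List ℕ, L.Nodup → (∀ i ∈ L, i ∈ If) →
      ((L.map fac).prod *ᵥ u ∈ W) ∧
      (∀ l, l < j₀ - L.length → S.EM l *ᵥ ((L.map fac).prod *ᵥ u) = 0) ∧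
      S.EM (j₀ - L.length) *ᵥ ((L.map fac).prod *ᵥ u) ≠ 0 := by
    intro L
    induction L with
    | nil =>
      intro _ _
      rw [List.map_nil, List.prod_nil]
      simp only [List.length_nil, Nat.sub_zero, one_mulVec]
      exact ⟨huW, hj₀min, hj₀mem⟩
    | cons a L ih =>
      intro hnd hmem
      obtain ⟨h1, h2, h3⟩ := ih (List.Nodup.of_cons hnd)
        (fun i hi => hmem i (List.mem_cons_of_mem a hi))
      have hlen : (a :: L).length = L.length + 1 := rfl
      have hlenIf : L.length + 1 ≤ If.card := by
        have hndc : (a :: L).toFinset.card = (a :: L).length := List.toFinset_card_of_nodup hnd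
        have hsubf : (a :: L).toFinset ⊆ If := fun i hi => hmem i (List.mem_toFinset.1 hi)
        have hcc := Finset.card_le_card hsubf
        rw [hndc, hlen] at hcc
        exact hcc
      have hlev : S.dualEndpoint W < j₀ - L.length := by omega
      have hlevD : j₀ - L.length ≤ D := by omega
      have hstep := step_lower S x hQ hD hX hirr hthin hlev hlevD (θ a) h1 h2 h3
      refine ⟨?_, ?_, ?_⟩
      · rw [List.map_cons, List.prod_cons, ← mulVec_mulVec]
        exact hstep.1
      · intro l hl
        rw [List.map_cons, List.prod_cons, ← mulVec_mulVec]
        refine hstep.2.1 l ?_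
        rw [hlen] at hl
        omega
      · rw [List.map_cons, List.prod_cons, ← mulVec_mulVec, hlen,
          show j₀ - (L.length + 1) = j₀ - L.length - 1 from by omega]
        exact hstep.2.2
  have hfinal := (hmain If.toList (Finset.nodup_toList If)
    (fun i hi => (Finset.mem_toList).1 hi)).2.2
  rw [Finset.length_toList] at hfinal
  rw [hNu, mulVec_zero] at hfinal
  exact hfinal rfl

lemma exists_irr (Y : Submodule ℂ (X → ℂ)) (hY : S.IsTSub x Y) (hne : Y ≠ ⊥) :
    ∃ W : Submodule ℂ (X → ℂ), W ≤ Y ∧ S.IsIrr x W := by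
  classical
  set P : Set ℕ := {n | ∃ W : Submodule ℂ (X → ℂ),
    W ≤ Y ∧ S.IsTSub x W ∧ W ≠ ⊥ ∧ Module.finrank ℂ W = n} with hP
  have hPne : P.Nonempty := ⟨Module.finrank ℂ Y, Y, le_refl _, hY, hne, rfl⟩
  obtain ⟨W, hWY, hWT, hWne, hWrank⟩ := Nat.sInf_mem hPne
  refine ⟨W, hWY, hWT, hWne, ?_⟩
  intro W' hW'le hW'T
  by_cases h : W' = ⊥
  · exact Or.inl h
  · right
    have hmem : Module.finrank ℂ W' ∈ P := ⟨W', le_trans hW'le hWY, hW'T, h, rfl⟩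
    have hle := Nat.sInf_le hmem
    exact Submodule.eq_of_le_of_finrank_le hW'le (by omega)

lemma orth_of_irr (χ : X → ℂ) (n : ℕ) :
    ∀ Y : Submodule ℂ (X → ℂ), Module.finrank ℂ Y = n → S.IsTSub x Y →
    (∀ W : Submodule ℂ (X → ℂ), W ≤ Y → S.IsIrr x W → ∀ w ∈ W, ip w χ = 0) →
    ∀ y ∈ Y, ip y χ = 0 := by
  induction n using Nat.strong_induction_on with
  | _ n ih =>
    intro Y hrank hYT hirrW y hy
    by_cases hbot : Y = ⊥
    · subst hbot
      rw [(Submodule.mem_bot ℂ).1 hy]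
      simp [ip]
    · obtain ⟨W, hWY, hirr⟩ := exists_irr S x Y hYT hbot
      obtain ⟨w, hwW, hperp⟩ := proj_exists W y
      set Y' : Submodule ℂ (X → ℂ) := perp W ⊓ Y with hY'
      have hy' : y - w ∈ Y' := ⟨hperp, Submodule.sub_mem _ hy (hWY hwW)⟩
      have hWrankpos : 0 < Module.finrank ℂ W := by
        rw [Module.finrank_pos_iff]
        exact (Submodule.nontrivial_iff_ne_bot).2 hirr.2.1
      have hdisj : W ⊓ Y' = ⊥ := by
        rw [Submodule.eq_bot_iff]
        rintro v ⟨hvW, hvP, _⟩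
        exact ip_self_eq_zero (hvP v hvW)
      have hsup : Y ≤ W ⊔ Y' := by
        intro v hv
        obtain ⟨w2, hw2, hp2⟩ := proj_exists W v
        rw [show v = w2 + (v - w2) from by ring]
        exact Submodule.add_mem _ (Submodule.mem_sup_left hw2)
          (Submodule.mem_sup_right ⟨hp2, Submodule.sub_mem _ hv (hWY hw2)⟩)
      have hranks := Submodule.finrank_sup_add_finrank_inf_eq W Y'
      rw [hdisj] at hranks
      have heqY : W ⊔ Y' = Y := le_antisymm (sup_le hWY inf_le_right) hsup
      rw [heqY] at hranks
      have hbotrank : Module.finrank ℂ (⊥ : Submodule ℂ (X → ℂ)) = 0 := finrank_bot ℂ _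
      have hY'rank : Module.finrank ℂ Y' < n := by omega
      have hY'T : S.IsTSub x Y' := by
        intro F hF v hv
        exact ⟨perp_isTSub S x hirr.1 F hF v hv.1, hYT F hF v hv.2⟩
      have hy'0 : ip (y - w) χ = 0 :=
        ih _ hY'rank Y' rfl hY'T
          (fun W2 hW2 hirr2 => hirrW W2 (le_trans hW2 inf_le_right) hirr2) _ hy'
      have hw0 : ip w χ = 0 := hirrW W hWY hirr w hwW
      rw [show y = (y - w) + w from by ring, ip_add_left, hy'0, hw0, add_zero]

end AMQ
namespace AMQ
open AssocScheme
variable {X : Type*} [Fintype X] [DecidableEq X] {D : ℕ} (S : AssocScheme X D) (x : X)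

lemma ip_sub_right (u v w : X → ℂ) : ip u (v - w) = ip u v - ip u w := by
  simp [ip, mul_sub, Finset.sum_sub_distrib]

def Zsub (t : ℕ) : Submodule ℂ (X → ℂ) where
  carrier := {v | ∀ F ∈ S.Talg x, ∀ j : ℕ, 1 ≤ j → j ≤ t → S.EM j *ᵥ (F *ᵥ v) = 0}
  zero_mem' := by
    intro F _ j _ _
    rw [mulVec_zero, mulVec_zero]
  add_mem' := by
    intro a b ha hb F hF j h1 h2
    rw [mulVec_add, mulVec_add, ha F hF j h1 h2, hb F hF j h1 h2, add_zero]
  smul_mem' := by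
    intro c a ha F hF j h1 h2
    rw [mulVec_smul, mulVec_smul, ha F hF j h1 h2, smul_zero]

lemma mem_Zsub {t : ℕ} {v : X → ℂ} : v ∈ Zsub S x t ↔
    ∀ F ∈ S.Talg x, ∀ j : ℕ, 1 ≤ j → j ≤ t → S.EM j *ᵥ (F *ᵥ v) = 0 := Iff.rfl

lemma Zsub_isTSub (t : ℕ) : S.IsTSub x (Zsub S x t) := by
  intro F hF v hv G hG j h1 h2
  have h := mulVec_mulVec v G F
  rw [h]
  exact hv (G * F) (Subalgebra.mul_mem _ hG hF) j h1 h2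

lemma dualEndpoint_pos_of_perpM {W : Submodule ℂ (X → ℂ)} (hWle : W ≤ perp (S.primary x))
    (hWne : W ≠ ⊥) : 1 ≤ S.dualEndpoint W := by
  have hE0 : ∀ w ∈ W, S.EM 0 *ᵥ w = 0 := by
    intro w hw
    refine E0_mulVec_eq_zero S ?_
    exact hWle hw _ (one_mem_primary S x)
  have hnot : (0 : ℕ) ∉ S.dualSupp W := by
    rintro ⟨-, hmap⟩
    apply hmap
    rw [Submodule.eq_bot_iff]
    rintro v ⟨w, hw, rfl⟩
    rw [Matrix.mulVecLin_apply]
    exact hE0 w hw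
  have hmem := Nat.sInf_mem (dualSupp_nonempty S hWne)
  have hdef : S.dualEndpoint W = sInf (S.dualSupp W) := rfl
  rw [← hdef] at hmem
  by_contra h
  have h0 : S.dualEndpoint W = 0 := by omega
  rw [h0] at hmem
  exact hnot hmem

end AMQ
open AssocScheme in
/-- **Corollary, cometric case.** Let `χ` be a code in a cometric scheme with
`δ^* = δ^*(χ)`, and let `1 ≤ t ≤ D` be such that for each irreducible `T(x)`-module `W`
with dual endpoint `1 ≤ r^*(W) ≤ t`, `#{i ∈ W_s : E_i^* χ ≠ 0} ≤ δ^* - r^*(W)`.  If every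
irreducible `T(x)`-module with dual endpoint at most `t` is dual thin, then `F χ` is a
relative `t`-design with respect to `x` for every `F ∈ T(x)`. -/
theorem assmus_mattson_cor_Q
    {X : Type*} [Fintype X] [DecidableEq X] {D : ℕ}
    (S : AssocScheme X D) (hS : S.IsCometric) (x : X)
    (χ : X → ℂ) (hχ : S.IsCode χ) (t : ℕ) (ht1 : 1 ≤ t) (htD : t ≤ D)
    (hcount : ∀ W : Submodule ℂ (X → ℂ), S.IsIrr x W →
      1 ≤ S.dualEndpoint W → S.dualEndpoint W ≤ t →
      (({i ∈ S.supp x W | (S.Estar x i).mulVec χ ≠ 0}.ncard : ℤ)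
        ≤ (S.deltaStar χ : ℤ) - (S.dualEndpoint W : ℤ)))
    (hthin : ∀ W : Submodule ℂ (X → ℂ), S.IsIrr x W → S.dualEndpoint W ≤ t →
      S.IsDualThin W) :
    ∀ F ∈ S.Talg x, S.RelDesign x t (F.mulVec χ) := by
  classical
  cases isEmpty_or_nonempty X with
  | inl hemp =>
    exfalso
    apply hχ.1
    have hz : χ = 0 := funext fun y => (hemp.false y).elim
    rw [hz]
    exact Submodule.zero_mem _
  | inr hne =>
  have hX : (Fintype.card X : ℂ) ≠ 0 := Nat.cast_ne_zero.2 Fintype.card_ne_zero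
  have hD : 0 < D := lt_of_lt_of_le ht1 htD
  have hMT : S.IsTSub x (S.primary x) := AMQ.primary_isTSub S x
  have hperpMT : S.IsTSub x (AMQ.perp (S.primary x)) := AMQ.perp_isTSub S x hMT
  have hZT : S.IsTSub x (AMQ.Zsub S x t) := AMQ.Zsub_isTSub S x t
  have hZ'T : S.IsTSub x (AMQ.Zsub S x t ⊓ AMQ.perp (S.primary x)) :=
    fun F hF v hv => ⟨hZT F hF v hv.1, hperpMT F hF v hv.2⟩
  have hYT : S.IsTSub x
      (AMQ.perp (AMQ.Zsub S x t ⊓ AMQ.perp (S.primary x)) ⊓ AMQ.perp (S.primary x)) :=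
    fun F hF v hv => ⟨AMQ.perp_isTSub S x hZ'T F hF v hv.1, hperpMT F hF v hv.2⟩
  -- χ is orthogonal to Y
  have hYorth : ∀ y ∈ (AMQ.perp (AMQ.Zsub S x t ⊓ AMQ.perp (S.primary x)) ⊓
      AMQ.perp (S.primary x)), AMQ.ip y χ = 0 := by
    refine AMQ.orth_of_irr S x χ _ _ rfl hYT ?_
    intro W hWY hirr
    have hWle : W ≤ AMQ.perp (S.primary x) := le_trans hWY inf_le_right
    have hr1 : 1 ≤ S.dualEndpoint W := AMQ.dualEndpoint_pos_of_perpM S x hWle hirr.2.1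
    have hrt : S.dualEndpoint W ≤ t := by
      by_contra hgt
      have hWZ : W ≤ AMQ.Zsub S x t := by
        intro v hv
        intro F hF j h1 h2
        exact AMQ.EM_mulVec_zero_of_lt_dualEndpoint S hirr.2.1 (by omega)
          (hirr.1 F hF v hv)
      have hWbot : W ≤ (⊥ : Submodule ℂ (X → ℂ)) := by
        rw [← AMQ.inf_perp_eq_bot (AMQ.Zsub S x t ⊓ AMQ.perp (S.primary x))]
        intro v hv
        exact ⟨⟨hWZ hv, hWle hv⟩, (le_trans hWY inf_le_left) hv⟩
      exact hirr.2.1 (le_bot_iff.1 hWbot)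
    exact AMQ.key_orthogonal S x hS hD hX χ hχ.1 hirr
      (hthin W hirr hrt) hr1 (hcount W hirr hr1 hrt)
  -- decompose χ
  obtain ⟨a, haM, hbperp⟩ := AMQ.proj_exists (S.primary x) χ
  obtain ⟨b₁, hb₁Z', hb₂perp⟩ := AMQ.proj_exists
    (AMQ.Zsub S x t ⊓ AMQ.perp (S.primary x)) (χ - a)
  have hb₂M : χ - a - b₁ ∈ AMQ.perp (S.primary x) :=
    Submodule.sub_mem _ hbperp ((inf_le_right : AMQ.Zsub S x t ⊓ AMQ.perp (S.primary x) ≤ _) hb₁Z')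
  have hb₂Y : χ - a - b₁ ∈ (AMQ.perp (AMQ.Zsub S x t ⊓ AMQ.perp (S.primary x)) ⊓
      AMQ.perp (S.primary x)) := ⟨hb₂perp, hb₂M⟩
  have hb₂0 : χ - a - b₁ = 0 := by
    refine AMQ.ip_self_eq_zero ?_
    have h1 : AMQ.ip (χ - a - b₁) χ = 0 := hYorth _ hb₂Y
    have h2 : AMQ.ip (χ - a - b₁) a = 0 :=
      AMQ.ip_eq_zero_of_mem_perp hb₂M haM
    have h3 : AMQ.ip (χ - a - b₁) b₁ = 0 :=
      AMQ.ip_eq_zero_of_mem_perp hb₂perp hb₁Z'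
    rw [show χ - a - b₁ = χ - a - b₁ from rfl, AMQ.ip_sub_right, AMQ.ip_sub_right, h1, h2, h3]
    ring
  have hZmem : χ - a ∈ AMQ.Zsub S x t := by
    have hba : χ - a = b₁ := by
      have := sub_eq_zero.1 hb₂0
      exact this
    rw [hba]
    exact ((inf_le_left : AMQ.Zsub S x t ⊓ AMQ.perp (S.primary x) ≤ _) hb₁Z')
  intro F hF j hj1 hjt
  obtain ⟨c, hc⟩ := AMQ.EM_primary S x j (by omega) (F *ᵥ a) (hMT F hF a haM)
  refine ⟨c, ?_⟩
  have hsplit : F *ᵥ χ = F *ᵥ a + F *ᵥ (χ - a) := by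
    rw [← mulVec_add]
    congr 1
    ring
  rw [hsplit, mulVec_add, hc, hZmem F hF j hj1 hjt, add_zero]
end
end
end
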